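/- arXiv:0907.3066 — 7 statements merged into one kernel-verified Lean document; each statement's English description precedes it below -/
import Mathlib

section
/- Let k and m be positive integers and let r_1, ..., r_m be integers such that for every permutation σ of {1,...,m}, the m(m+1)/2 sums ∑_{l=i}^{j} r_{σ(l)} (1 ≤ i ≤ j ≤ m) are pairwise distinct. Then there exist infinitely many prime numbers p such that r_1, ..., r_m is an m-term permutation chain of kth power residue modulo p. -/
/-- `c` is a `k`th power residue modulo the ideal `P`: there is `x` with `x ^ k ≡ c (mod P)`. -/
def IsKthPowerResidue {A : Type*} [CommRing A] (k : ℕ) (P : Ideal A) (c : A) : Prop :=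
  ∃ x : A, x ^ k - c ∈ P

/-- `r 1, ..., r m` is an `m`-term permutation chain of `k`th power residue modulo `P`:
for every permutation `σ` of `{1, ..., m}`, the `m(m+1)/2` sums
`∑_{l=i}^{j} r (σ l)` (`i ≤ j`) are pairwise incongruent modulo `P` and
each is a `k`th power residue modulo `P`. -/
def IsPermutationChain {A : Type*} [CommRing A] (k : ℕ) {m : ℕ} (P : Ideal A)
    (r : Fin m → A) : Prop :=
  ∀ σ : Equiv.Perm (Fin m),
    (∀ i j i' j' : Fin m, i ≤ j → i' ≤ j' → (i, j) ≠ (i', j') →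
      (∑ l ∈ Finset.Icc i j, r (σ l)) - (∑ l ∈ Finset.Icc i' j', r (σ l)) ∉ P) ∧
    (∀ i j : Fin m, i ≤ j → IsKthPowerResidue k P (∑ l ∈ Finset.Icc i j, r (σ l)))

/-!
Let `T` be the finite set of all the chain sums. In a number field containing a `k`th root `α_a`
of every `a ∈ T`, choose a primitive element `θ` integral over `ℤ`; then `d_a α_a = Q_a(θ)` with
`Q_a ∈ ℤ[X]` and `d_a ≠ 0`, so the minimal polynomial `F` of `θ` over `ℤ` divides
`Q_a ^ k - d_a ^ k a`. Hence, if a prime `p ∤ ∏ d_a` divides a value `F(n)`, every `a ∈ T` is the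
`k`th power of `Q_a(n) / d_a` modulo `p`. By Schur's theorem infinitely many primes divide values
of the nonconstant polynomial `F`, and all but finitely many of them exceed twice every `|a|`,
which makes the distinct elements of `T` pairwise incongruent.
-/

open Polynomial IntermediateField

theorem Polynomial.exists_lt_abs_eval {F : ℤ[X]} (hF : 0 < F.degree) (B : ℤ) :
    ∃ t : ℤ, B < |F.eval t| := by
  have hFℝ : 0 < (F.map (Int.castRingHom ℝ)).degree := by
    rwa [degree_map_eq_of_injective (RingHom.injective_int _)]
  obtain ⟨t, ht⟩ := (((F.map (Int.castRingHom ℝ)).abs_tendsto_atTop hFℝ).comp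
    tendsto_natCast_atTop_atTop).eventually_gt_atTop (B : ℝ) |>.exists
  simp only [Function.comp_apply, eval_natCast_map, eq_intCast] at ht
  exact ⟨t, by exact_mod_cast ht⟩

theorem Polynomial.exists_prime_not_dvd_dvd_eval {F : ℤ[X]} (hF : 0 < F.degree) {M : ℤ}
    (hM : M ≠ 0) : ∃ p : ℕ, p.Prime ∧ ¬(p : ℤ) ∣ M ∧ ∃ n : ℤ, (p : ℤ) ∣ F.eval n := by
  rcases eq_or_ne (F.eval 0) 0 with hc | hc
  · obtain ⟨p, hMp, hp⟩ := Nat.exists_infinite_primes (M.natAbs + 1)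
    refine ⟨p, hp, fun hpM => ?_, 0, by simp [hc]⟩
    have := Int.natAbs_le_of_dvd_ne_zero hpM hM
    omega
  set c := F.eval 0
  have hG : 0 < (F.comp (C (c * M) * X)).degree := by
    rw [← natDegree_pos_iff_degree_pos, natDegree_comp, natDegree_C_mul_X _ (mul_ne_zero hc hM),
      mul_one, natDegree_pos_iff_degree_pos]
    exact hF
  obtain ⟨t, ht⟩ := exists_lt_abs_eval hG |c|
  simp only [eval_comp, eval_mul, eval_C, eval_X] at ht
  -- `F (c M t) ≡ F 0 = c  (mod c M t)`, so `F (c M t) = c u` with `u ≡ 1 (mod M)`.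
  obtain ⟨w, hw⟩ := sub_dvd_eval_sub (c * M * t) 0 F
  set u := 1 + M * (t * w)
  have hFu : F.eval (c * M * t) = c * u := by linear_combination hw
  have hu : u.natAbs ≠ 1 := by
    intro hu
    rw [hFu, abs_mul, Int.abs_eq_natAbs u, hu] at ht
    simp at ht
  obtain ⟨p, hp, hpu⟩ := Nat.exists_prime_and_dvd hu
  replace hpu : (p : ℤ) ∣ u := Int.natCast_dvd.mpr hpu
  refine ⟨p, hp, fun hpM => ?_, c * M * t, hFu ▸ hpu.mul_left c⟩
  have : (p : ℤ) ∣ 1 := (dvd_add_left ((hpM.mul_right _))).mp hpu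
  exact hp.one_lt.ne' (by exact_mod_cast Int.eq_one_of_dvd_one (by positivity) this)

theorem IsKthPowerResidue.of_dvd_pow_sub_pow_mul {A : Type*} [CommRing A] {k : ℕ}
    {q d y a : A} (hqd : IsCoprime q d) (h : q ∣ y ^ k - d ^ k * a) :
    IsKthPowerResidue k (Ideal.span {q}) a := by
  obtain ⟨u, v, huv⟩ := hqd
  -- `v` inverts `d` modulo `q`, so `y v` is a `k`th root of `a`.
  have hdv : q ∣ (d * v) ^ k - 1 := by
    have : q ∣ d * v - 1 := ⟨-u, by linear_combination huv⟩
    simpa using this.trans (sub_dvd_pow_sub_pow (d * v) 1 k)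
  refine ⟨y * v, Ideal.mem_span_singleton.mpr ?_⟩
  have : (y * v) ^ k - a = v ^ k * (y ^ k - d ^ k * a) + a * ((d * v) ^ k - 1) := by ring
  rw [this]
  exact dvd_add (h.mul_left _) (hdv.mul_left _)

theorem exists_pow_eq_of_splits_prod {K L ι : Type*} [Field K] [Field L] [Algebra K L] {k : ℕ}
    (hk : 0 < k) {s : Finset ι} {b : ι → K}
    (hs : Splits ((∏ i ∈ s, (X ^ k - C (b i))).map (algebraMap K L))) {i : ι} (hi : i ∈ s) :
    ∃ α : L, α ^ k = algebraMap K L (b i) := by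
  have hne : ∏ i ∈ s, (X ^ k - C (b i)) ≠ 0 :=
    Finset.prod_ne_zero_iff.mpr fun i _ => X_pow_sub_C_ne_zero hk _
  have hsi := hs.of_dvd (map_ne_zero hne) (map_dvd _ (Finset.dvd_prod_of_mem _ hi))
  obtain ⟨α, hα⟩ := hsi.exists_eval_eq_zero <| by
    rw [degree_map, degree_X_pow_sub_C hk]
    exact_mod_cast hk.ne'
  exact ⟨α, by simpa [sub_eq_zero] using hα⟩

section PrimitiveElement

variable {R K L : Type*} [CommRing R] [Field K] [Algebra R K] [IsFractionRing R K]
  [Field L] [Algebra K L] [Algebra R L] [IsScalarTower R K L]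

theorem exists_isIntegral_primitive_element [IsDomain R] [FiniteDimensional K L]
    [Algebra.IsSeparable K L] :
    ∃ θ : L, IsIntegral R θ ∧ K⟮θ⟯ = ⊤ := by
  obtain ⟨θ, hθ⟩ := Field.exists_primitive_element K L
  have hθalg : IsAlgebraic R θ :=
    (IsFractionRing.isAlgebraic_iff R K L).mpr (Algebra.IsAlgebraic.isAlgebraic θ)
  obtain ⟨y, hy, hyθ⟩ := hθalg.exists_integral_multiple
  refine ⟨y • θ, hyθ, eq_top_iff.mpr (hθ ▸ adjoin_simple_le_iff.mpr ?_)⟩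
  have hy' : algebraMap R K y ≠ 0 := (map_ne_zero_iff _ (IsFractionRing.injective R K)).mpr hy
  have hθy : (algebraMap R K y)⁻¹ • y • θ = θ := by
    rw [← IsScalarTower.algebraMap_smul K y θ, smul_smul, inv_mul_cancel₀ hy', one_smul]
  have hmem :=
    smul_mem K⟮y • θ⟯ (mem_adjoin_simple_self K (y • θ)) (x := (algebraMap R K y)⁻¹)
  rwa [hθy] at hmem

theorem exists_aeval_eq_smul_of_mem_adjoin {θ α : L} (hθ : IsIntegral K θ) (hα : α ∈ K⟮θ⟯) :
    ∃ d ∈ nonZeroDivisors R, ∃ Q : R[X], aeval θ Q = d • α := by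
  rw [← mem_toSubalgebra, adjoin_simple_toSubalgebra_of_isAlgebraic hθ.isAlgebraic,
    Algebra.adjoin_singleton_eq_range_aeval] at hα
  obtain ⟨q, rfl⟩ := hα
  obtain ⟨d, hd, hdq⟩ := IsLocalization.integerNormalization_spec (nonZeroDivisors R) q
  refine ⟨d, hd, IsLocalization.integerNormalization (nonZeroDivisors R) q, ?_⟩
  rw [← aeval_map_algebraMap K, hdq, ← IsScalarTower.algebraMap_smul K d q, map_smul,
    IsScalarTower.algebraMap_smul]
  rfl

end PrimitiveElement

theorem exists_forall_isKthPowerResidue_of_dvd_eval {k : ℕ} (hk : 0 < k) (T : Finset ℤ) :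
    ∃ F : ℤ[X], 0 < F.degree ∧ ∃ B : ℤ, B ≠ 0 ∧ ∀ q : ℤ, IsCoprime q B → ∀ n : ℤ,
      q ∣ F.eval n → ∀ a ∈ T, IsKthPowerResidue k (Ideal.span {q}) a := by
  let L := (∏ a ∈ T, (X ^ k - C (a : ℚ))).SplittingField
  obtain ⟨θ, hθ, hθtop⟩ := exists_isIntegral_primitive_element (R := ℤ) (K := ℚ) (L := L)
  have hdvd : ∀ a ∈ T, ∃ d : ℤ, d ≠ 0 ∧ ∃ Q : ℤ[X], minpoly ℤ θ ∣ Q ^ k - C (d ^ k * a) := by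
    intro a ha
    obtain ⟨α, hα⟩ :=
      exists_pow_eq_of_splits_prod (L := L) hk (SplittingField.splits _) ha
    obtain ⟨d, hd, Q, hQ⟩ := exists_aeval_eq_smul_of_mem_adjoin (R := ℤ)
      (hθ.tower_top (A := ℚ)) (hθtop ▸ mem_top : α ∈ ℚ⟮θ⟯)
    refine ⟨d, nonZeroDivisors.ne_zero hd, Q, minpoly.isIntegrallyClosed_dvd hθ ?_⟩
    rw [map_intCast] at hα
    simp [hQ, mul_pow, hα]
  choose d hd Q hQ using hdvd
  refine ⟨minpoly ℤ θ, minpoly.degree_pos hθ, ∏ a ∈ T.attach, d a a.2,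
    Finset.prod_ne_zero_iff.mpr fun a _ => hd a a.2, fun q hq n hqn a ha => ?_⟩
  have hqd : IsCoprime q (d a ha) :=
    hq.of_isCoprime_of_dvd_right (Finset.dvd_prod_of_mem _ (Finset.mem_attach T ⟨a, ha⟩))
  refine IsKthPowerResidue.of_dvd_pow_sub_pow_mul (y := (Q a ha).eval n) hqd ?_
  simpa using hqn.trans (eval_dvd (hQ a ha) (x := n))

theorem infinite_setOf_prime_forall_isKthPowerResidue {k : ℕ} (hk : 0 < k) (T : Finset ℤ) :
    {p : ℕ | p.Prime ∧ ∀ a ∈ T, IsKthPowerResidue k (Ideal.span {(p : ℤ)}) a}.Infinite := by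
  obtain ⟨F, hF, B, hB, hres⟩ := exists_forall_isKthPowerResidue_of_dvd_eval hk T
  refine Set.infinite_of_forall_exists_gt fun N => ?_
  obtain ⟨p, hp, hpM, n, hpn⟩ :=
    F.exists_prime_not_dvd_dvd_eval hF (M := B * N.factorial) (by positivity)
  have hpB : IsCoprime (p : ℤ) B :=
    (Nat.prime_iff_prime_int.mp hp).coprime_iff_not_dvd.mpr fun h => hpM (h.mul_right _)
  refine ⟨p, ⟨hp, hres p hpB n hpn⟩, not_le.mp fun hpN => hpM (dvd_mul_of_dvd_right ?_ B)⟩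
  exact_mod_cast Nat.dvd_factorial hp.pos hpN

theorem Finset.pairwise_sub_notMem_span_of_lt (T : Finset ℤ) {p : ℕ}
    (hp : 2 * T.sup Int.natAbs < p) :
    (T : Set ℤ).Pairwise fun a b => a - b ∉ Ideal.span {(p : ℤ)} := by
  intro a ha b hb hab hdvd
  have hlt : (a - b).natAbs < (p : ℤ).natAbs := by
    have := Int.natAbs_sub_le a b
    have := T.le_sup (f := Int.natAbs) ha
    have := T.le_sup (f := Int.natAbs) hb
    omega
  exact sub_ne_zero.mpr hab
    (Int.eq_zero_of_dvd_of_natAbs_lt_natAbs (Ideal.mem_span_singleton.mp hdvd) hlt)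

theorem infinite_setOf_prime_pairwise_and_forall_isKthPowerResidue {k : ℕ} (hk : 0 < k)
    (T : Finset ℤ) :
    {p : ℕ | p.Prime ∧ (T : Set ℤ).Pairwise (fun a b => a - b ∉ Ideal.span {(p : ℤ)}) ∧
      ∀ a ∈ T, IsKthPowerResidue k (Ideal.span {(p : ℤ)}) a}.Infinite := by
  refine ((infinite_setOf_prime_forall_isKthPowerResidue hk T).sdiff
    (Set.finite_le_nat (2 * T.sup Int.natAbs))).mono ?_
  rintro p ⟨⟨hp, hres⟩, hpT⟩
  exact ⟨hp, T.pairwise_sub_notMem_span_of_lt (not_le.mp hpT), hres⟩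

theorem kth_power_residue_permutation_chain_int_general (k m : ℕ) (hk : 0 < k)
    (r : Fin m → ℤ)
    (hr : ∀ σ : Equiv.Perm (Fin m), ∀ i j i' j' : Fin m, i ≤ j → i' ≤ j' →
      (i, j) ≠ (i', j') →
      (∑ l ∈ Finset.Icc i j, r (σ l)) ≠ (∑ l ∈ Finset.Icc i' j', r (σ l))) :
    {p : ℕ | p.Prime ∧ IsPermutationChain k (Ideal.span {(p : ℤ)}) r}.Infinite := by
  let T : Finset ℤ := Finset.univ.image fun x : Equiv.Perm (Fin m) × Fin m × Fin m =>
    ∑ l ∈ Finset.Icc x.2.1 x.2.2, r (x.1 l)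
  have hT (σ : Equiv.Perm (Fin m)) (i j : Fin m) : ∑ l ∈ Finset.Icc i j, r (σ l) ∈ T :=
    Finset.mem_image_of_mem _ (Finset.mem_univ (σ, i, j))
  refine (infinite_setOf_prime_pairwise_and_forall_isKthPowerResidue hk T).mono ?_
  rintro p ⟨hp, hdistinct, hres⟩
  exact ⟨hp, fun σ => ⟨fun i j i' j' hij hij' hne =>
    hdistinct (hT σ i j) (hT σ i' j') (hr σ i j i' j' hij hij' hne),
    fun i j _ => hres _ (hT σ i j)⟩⟩

theorem kth_power_residue_permutation_chain_int (k m : ℕ) (hk : 0 < k) (hm : 0 < m)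
    (r : Fin m → ℤ)
    (hr : ∀ σ : Equiv.Perm (Fin m), ∀ i j i' j' : Fin m, i ≤ j → i' ≤ j' →
      (i, j) ≠ (i', j') →
      (∑ l ∈ Finset.Icc i j, r (σ l)) ≠ (∑ l ∈ Finset.Icc i' j', r (σ l))) :
    {p : ℕ | p.Prime ∧ IsPermutationChain k (Ideal.span {(p : ℤ)}) r}.Infinite :=
  kth_power_residue_permutation_chain_int_general k m hk r hr
end

section
/- Let F_q be a finite field, and let A = F_q[T] be the polynomial ring in one variable over F_q. Let k and m be positive integers and let r_1, ..., r_m be polynomials in A such that for every permutation σ of {1,...,m}, the m(m+1)/2 sums ∑_{l=i}^{j} r_{σ(l)} (1 ≤ i ≤ j ≤ m) are pairwise distinct in A. Then the set of nonzero prime ideals P of A (equivalently, ideals generated by irreducible polynomials) for which r_1, ..., r_m is an m-term permutation chain of kth power residue modulo P is infinite. -/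
/-!
Write `k = p ^ e * n` with `p` the characteristic exponent of `𝔽_q` and `p ∤ n`. Residue fields
of `𝔽_q[T]` are finite, hence perfect, so only `n`-th powers matter. Adjoining `n`-th roots of the
finitely many interval sums to `𝔽_q(T)` gives a finite separable extension; clearing denominators in
the minimal polynomial of a primitive element yields a nonconstant `F ∈ 𝔽_q[T][X]` with
`F ∣ P ^ n - E ^ n * s` for every sum `s`. A prime `π ∣ F(a)` not dividing `E` then makes `s` an
`n`-th power modulo `π`, and Schur's argument produces such primes avoiding any given nonzero
element, in particular the differences of sums.
-/

open Polynomial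

section PowerResidue

variable {A : Type*} [CommRing A] {I : Ideal A} {k : ℕ} {c : A}

theorem isKthPowerResidue_iff_exists_pow_eq :
    IsKthPowerResidue k I c ↔ ∃ y : A ⧸ I, y ^ k = Ideal.Quotient.mk I c := by
  constructor
  · rintro ⟨x, hx⟩
    exact ⟨Ideal.Quotient.mk I x, by rwa [← map_pow, Ideal.Quotient.eq]⟩
  · rintro ⟨y, hy⟩
    obtain ⟨x, rfl⟩ := Ideal.Quotient.mk_surjective y
    exact ⟨x, Ideal.Quotient.eq.mp (by rw [map_pow, hy])⟩

theorem IsKthPowerResidue.mul_of_perfectRing (q : ℕ) [PerfectRing (A ⧸ I) q]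
    (h : IsKthPowerResidue k I c) : IsKthPowerResidue (q * k) I c := by
  rw [isKthPowerResidue_iff_exists_pow_eq] at h ⊢
  obtain ⟨y, hy⟩ := h
  obtain ⟨w, rfl⟩ := (PerfectRing.bijective_frobenius (R := A ⧸ I) (p := q)).2 y
  exact ⟨w, by rw [pow_mul, hy]⟩

theorem IsKthPowerResidue.of_pow_sub_pow_mul_mem [I.IsMaximal] {x E : A}
    (h : x ^ k - E ^ k * c ∈ I) (hE : E ∉ I) : IsKthPowerResidue k I c := by
  let := Ideal.Quotient.field I
  rw [isKthPowerResidue_iff_exists_pow_eq]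
  have hE' : Ideal.Quotient.mk I E ≠ 0 := by rwa [Ne, Ideal.Quotient.eq_zero_iff_mem]
  have hx : Ideal.Quotient.mk I x ^ k = Ideal.Quotient.mk I E ^ k * Ideal.Quotient.mk I c := by
    rw [← sub_eq_zero, ← map_pow, ← map_pow, ← map_mul, ← map_sub,
      Ideal.Quotient.eq_zero_iff_mem]
    exact h
  exact ⟨Ideal.Quotient.mk I x / Ideal.Quotient.mk I E, by
    rw [div_pow, hx, mul_div_cancel_left₀ _ (pow_ne_zero _ hE')]⟩

end PowerResidue

theorem exists_eq_pow_mul_natCast_ne_zero {R : Type*} [Semiring R] (q : ℕ) [hq : ExpChar R q]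
    {k : ℕ} (hk : k ≠ 0) : ∃ e n : ℕ, k = q ^ e * n ∧ (n : R) ≠ 0 := by
  cases hq with
  | zero => exact ⟨0, k, by simp, Nat.cast_ne_zero.mpr hk⟩
  | prime hp =>
    exact ⟨k.factorization q, k / q ^ k.factorization q,
      (Nat.ordProj_mul_ordCompl_eq_self k q).symm,
      by rw [Ne, CharP.cast_eq_zero_iff R q]; exact Nat.not_dvd_ordCompl hp hk⟩

theorem Set.infinite_of_forall_exists_ne_bot_notMem {A : Type*} [CommRing A] [IsDomain A]
    {S : Set (Ideal A)} (h : ∀ M : A, M ≠ 0 → ∃ P ∈ S, P ≠ ⊥ ∧ M ∉ P) : S.Infinite := by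
  classical
  intro hfin
  let J := ∏ P ∈ hfin.toFinset.filter (· ≠ ⊥), P
  have hJ : J ≠ ⊥ := Finset.prod_ne_zero_iff.mpr fun P hP => (Finset.mem_filter.mp hP).2
  obtain ⟨M, hMJ, hM⟩ := Submodule.exists_mem_ne_zero_of_ne_bot hJ
  obtain ⟨P, hP, hPbot, hMP⟩ := h M hM
  exact hMP (Ideal.prod_le_inf.trans (Finset.inf_le (by simp [hP, hPbot])) hMJ)

section Schur

variable {A : Type*} [CommRing A] [IsDomain A]

theorem Polynomial.finite_setOf_eval_mem {G : A[X]} (hG : 0 < G.natDegree) {V : Set A}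
    (hV : V.Finite) : {u | G.eval u ∈ V}.Finite := by
  refine (hV.biUnion fun v _ => finite_setOfPred_isRoot (p := G - C v) ?_).subset
    fun u hu => Set.mem_biUnion hu (by simp)
  intro h
  rw [sub_eq_zero.mp h, natDegree_C] at hG
  exact hG.false

theorem exists_irreducible_dvd_eval_not_dvd [Infinite A] [Finite Aˣ] [WfDvdMonoid A]
    {F : A[X]} (hF : 0 < F.natDegree) {M : A} (hM : M ≠ 0) :
    ∃ π a : A, Irreducible π ∧ π ∣ F.eval a ∧ ¬π ∣ M := by
  obtain ⟨a₀, hc⟩ : ∃ a₀, F.eval a₀ ≠ 0 := by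
    by_contra! h
    exact ne_zero_of_natDegree_gt hF (zero_of_eval_zero F h)
  set c := F.eval a₀
  let G := F.comp (C a₀ + C (c * M) * X)
  have hG : 0 < G.natDegree := by
    rwa [natDegree_comp, add_comm, natDegree_linear (mul_ne_zero hc hM), mul_one]
  obtain ⟨u, hu⟩ : ∃ u, G.eval u ∉ insert 0 (Set.range fun v : Aˣ => c * v) :=
    (finite_setOf_eval_mem hG ((Set.finite_range _).insert 0)).infinite_compl.nonempty
  -- `F (a₀ + c M u) = c (1 + M u w)`, and the cofactor, coprime to `M`, is neither `0` nor a unit.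
  set a := a₀ + c * M * u
  obtain ⟨w, hw⟩ : c * M * u ∣ F.eval a - c := by
    simpa [a] using sub_dvd_eval_sub a a₀ F
  set z := 1 + M * (u * w)
  have hGu : G.eval u = c * z := by
    simp only [G, eval_comp, eval_add, eval_mul, eval_C, eval_X]
    linear_combination hw
  rw [hGu] at hu
  have hz0 : z ≠ 0 := fun h => hu (by simp [h])
  have hzu : ¬IsUnit z := fun h => hu (Set.mem_insert_of_mem _ ⟨h.unit, rfl⟩)
  obtain ⟨π, hπ, hπz⟩ := WfDvdMonoid.exists_irreducible_factor hzu hz0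
  have hzM : IsCoprime z M := ⟨1, -(u * w), by ring⟩
  refine ⟨π, a, hπ, ?_, fun hπM => hπ.not_isUnit (hzM.isUnit_of_dvd' hπz hπM)⟩
  rw [show F.eval a = G.eval u by simp [G, eval_comp, a], hGu]
  exact dvd_mul_of_dvd_right hπz c

end Schur

theorem exists_natDegree_pos_forall_dvd_pow_sub_C {K ι : Type*} [Field K] [Finite ι] {n : ℕ}
    (hn : (n : K) ≠ 0) (s : ι → K) :
    ∃ g : K[X], 0 < g.natDegree ∧ ∀ i, ∃ p : K[X], g ∣ p ^ n - C (s i) := by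
  have : NeZero (n : SeparableClosure K) :=
    ⟨by simpa using (algebraMap K (SeparableClosure K)).injective.ne hn⟩
  choose α hα using fun i =>
    IsSepClosed.exists_pow_nat_eq (algebraMap K (SeparableClosure K) (s i)) n
  let L := IntermediateField.adjoin K (Set.range α)
  have : FiniteDimensional K L := IntermediateField.finiteDimensional_adjoin
    fun x _ => Algebra.IsSeparable.isIntegral K x
  let pb := Field.powerBasisOfFiniteOfSeparable K L
  refine ⟨minpoly K pb.gen, pb.natDegree_minpoly ▸ pb.dim_pos, fun i => ?_⟩
  have hαL : α i ∈ L := IntermediateField.subset_adjoin K _ (Set.mem_range_self i)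
  obtain ⟨p, -, hp⟩ := pb.exists_eq_aeval ⟨α i, hαL⟩
  refine ⟨p, minpoly.dvd K _ ?_⟩
  rw [map_sub, map_pow, ← hp, aeval_C]
  exact Subtype.ext (by simp [hα])

section ClearingDenominators

variable {A K : Type*} [CommRing A] [IsDomain A] [Field K] [Algebra A K] [IsFractionRing A K]

theorem exists_map_eq_C_mul (p : K[X]) :
    ∃ b : A, b ≠ 0 ∧ ∃ P : A[X], P.map (algebraMap A K) = C (algebraMap A K b) * p := by
  obtain ⟨b, hb, hP⟩ := IsLocalization.integerNormalization_spec (nonZeroDivisors A) p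
  refine ⟨b, nonZeroDivisors.ne_zero hb, _, hP.trans ?_⟩
  rw [Algebra.smul_def, Polynomial.algebraMap_apply]

theorem exists_dvd_C_mul_of_map_dvd {F H : A[X]}
    (h : F.map (algebraMap A K) ∣ H.map (algebraMap A K)) : ∃ c : A, c ≠ 0 ∧ F ∣ C c * H := by
  obtain ⟨q, hq⟩ := h
  obtain ⟨c, hc, Q, hQ⟩ := exists_map_eq_C_mul (A := A) q
  refine ⟨c, hc, Q, map_injective _ (IsFractionRing.injective A K) ?_⟩
  rw [Polynomial.map_mul, Polynomial.map_mul, hQ, hq, map_C]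
  ring

end ClearingDenominators

theorem exists_natDegree_pos_forall_dvd_pow_sub_C_mul_pow {A ι : Type*} [CommRing A] [IsDomain A]
    [Finite ι] {n : ℕ} (hn : (n : A) ≠ 0) (s : ι → A) :
    ∃ F : A[X], 0 < F.natDegree ∧
      ∀ i, ∃ (E : A) (P : A[X]), E ≠ 0 ∧ F ∣ P ^ n - C (E ^ n * s i) := by
  let K := FractionRing A
  have hinj : Function.Injective (algebraMap A K) := IsFractionRing.injective A K
  obtain ⟨g, hg, hgs⟩ := exists_natDegree_pos_forall_dvd_pow_sub_C (K := K)
    (by simpa using hinj.ne hn) fun i => algebraMap A K (s i)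
  obtain ⟨b, hb, F, hF⟩ := exists_map_eq_C_mul (A := A) g
  refine ⟨F, ?_, fun i => ?_⟩
  · rwa [← natDegree_map_eq_of_injective hinj, hF,
      natDegree_C_mul ((map_ne_zero_iff _ hinj).mpr hb)]
  obtain ⟨p, hp⟩ := hgs i
  obtain ⟨b₁, hb₁, P, hP⟩ := exists_map_eq_C_mul (A := A) p
  obtain ⟨c, hc, hFc⟩ : ∃ c : A, c ≠ 0 ∧ F ∣ C c * (C b * (P ^ n - C (b₁ ^ n * s i))) := by
    refine exists_dvd_C_mul_of_map_dvd (K := K) ?_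
    rw [hF, Polynomial.map_mul, map_C]
    refine mul_dvd_mul_left _ (hp.trans ⟨C (algebraMap A K b₁) ^ n, ?_⟩)
    simp only [Polynomial.map_sub, Polynomial.map_pow, Polynomial.map_mul, hP, map_C, map_mul,
      map_pow]
    ring
  have hn0 : n ≠ 0 := by rintro rfl; simp at hn
  obtain ⟨d, rfl⟩ := Nat.exists_eq_add_one_of_ne_zero hn0
  refine ⟨c * b * b₁, C (c * b) * P, by simp [hc, hb, hb₁], hFc.trans ⟨C (c * b) ^ d, ?_⟩⟩
  simp only [C_mul, C_pow]
  ring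

theorem Polynomial.finite_quotient_span_singleton {K : Type*} [Field K] [Finite K] {f : K[X]}
    (hf : f ≠ 0) : Finite (K[X] ⧸ Ideal.span {f}) :=
  have := (AdjoinRoot.powerBasis hf).finite
  Module.finite_of_finite K (M := AdjoinRoot f)

instance Polynomial.finite_units {K : Type*} [Field K] [Finite K] : Finite K[X]ˣ := by
  refine Finite.of_injective (fun u : K[X]ˣ => (u : K[X]).coeff 0) fun u v huv => Units.ext ?_
  obtain ⟨a, -, ha⟩ := isUnit_iff.mp u.isUnit
  obtain ⟨b, -, hb⟩ := isUnit_iff.mp v.isUnit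
  simp only [← ha, ← hb, coeff_C_zero] at huv ⊢
  rw [huv]

theorem isKthPowerResidue_span_of_dvd_eval {Fq : Type*} [Field Fq] [Finite Fq] {π : Fq[X]}
    (hπ : Irreducible π) {F P : Fq[X][X]} {a E s : Fq[X]} {n : ℕ} (hFa : π ∣ F.eval a)
    (hF : F ∣ P ^ n - C (E ^ n * s)) (hE : ¬π ∣ E) (e : ℕ) :
    IsKthPowerResidue (ringExpChar Fq ^ e * n) (Ideal.span {π}) s := by
  have := PrincipalIdealRing.isMaximal_of_irreducible hπ
  have := finite_quotient_span_singleton hπ.ne_zero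
  have := expChar_of_injective_algebraMap (algebraMap Fq (Fq[X] ⧸ Ideal.span {π})).injective
    (ringExpChar Fq)
  -- the residue field is finite, hence perfect
  refine IsKthPowerResidue.mul_of_perfectRing _ (.of_pow_sub_pow_mul_mem (x := P.eval a) (E := E) ?_
    (by rwa [Ideal.mem_span_singleton]))
  have := eval_dvd (x := a) hF
  simp only [eval_sub, eval_pow, eval_C] at this
  exact Ideal.mem_of_dvd _ this (Ideal.mem_span_singleton.mpr hFa)

theorem exists_ne_zero_forall_intervalSum_sub_dvd {A : Type*} [CommRing A] [IsDomain A] {m : ℕ}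
    (r : Fin m → A)
    (hr : ∀ σ : Equiv.Perm (Fin m), ∀ i j i' j' : Fin m, i ≤ j → i' ≤ j' → (i, j) ≠ (i', j') →
      (∑ l ∈ Finset.Icc i j, r (σ l)) ≠ (∑ l ∈ Finset.Icc i' j', r (σ l))) :
    ∃ D : A, D ≠ 0 ∧ ∀ σ : Equiv.Perm (Fin m), ∀ i j i' j' : Fin m, i ≤ j → i' ≤ j' →
      (i, j) ≠ (i', j') →
      (∑ l ∈ Finset.Icc i j, r (σ l)) - (∑ l ∈ Finset.Icc i' j', r (σ l)) ∣ D := by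
  let pairs := (Finset.univ : Finset (Equiv.Perm (Fin m) × (Fin m × Fin m) × Fin m × Fin m)).filter
    fun y => y.2.1.1 ≤ y.2.1.2 ∧ y.2.2.1 ≤ y.2.2.2 ∧ y.2.1 ≠ y.2.2
  let diff (y : Equiv.Perm (Fin m) × (Fin m × Fin m) × Fin m × Fin m) : A :=
    (∑ l ∈ Finset.Icc y.2.1.1 y.2.1.2, r (y.1 l)) - ∑ l ∈ Finset.Icc y.2.2.1 y.2.2.2, r (y.1 l)
  refine ⟨∏ y ∈ pairs, diff y, Finset.prod_ne_zero_iff.mpr ?_,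
    fun σ i j i' j' hij hij' hne => Finset.dvd_prod_of_mem diff (a := (σ, (i, j), i', j'))
      (by simp [pairs, hij, hij', hne])⟩
  rintro ⟨σ, ⟨i, j⟩, i', j'⟩ hy
  simp only [pairs, Finset.mem_filter] at hy
  exact sub_ne_zero.mpr (hr σ i j i' j' hy.2.1 hy.2.2.1 hy.2.2.2)

theorem kth_power_residue_permutation_chain_polynomial_general (Fq : Type*) [Field Fq] [Fintype Fq]
    (k m : ℕ) (hk : 0 < k) (r : Fin m → Polynomial Fq)
    (hr : ∀ σ : Equiv.Perm (Fin m), ∀ i j i' j' : Fin m, i ≤ j → i' ≤ j' →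
      (i, j) ≠ (i', j') →
      (∑ l ∈ Finset.Icc i j, r (σ l)) ≠ (∑ l ∈ Finset.Icc i' j', r (σ l))) :
    {P : Ideal (Polynomial Fq) | P ≠ ⊥ ∧ P.IsPrime ∧ IsPermutationChain k P r}.Infinite := by
  obtain ⟨e, n, rfl, hn⟩ := exists_eq_pow_mul_natCast_ne_zero (R := Fq) (ringExpChar Fq) hk.ne'
  obtain ⟨D, hD, hdvdD⟩ := exists_ne_zero_forall_intervalSum_sub_dvd r hr
  let sum (x : Equiv.Perm (Fin m) × Fin m × Fin m) : Fq[X] :=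
    ∑ l ∈ Finset.Icc x.2.1 x.2.2, r (x.1 l)
  obtain ⟨F, hF, hFs⟩ := exists_natDegree_pos_forall_dvd_pow_sub_C_mul_pow (A := Fq[X]) (n := n)
    (by rwa [← C_eq_natCast, Ne, C_eq_zero]) sum
  choose E P hE hEP using hFs
  refine Set.infinite_of_forall_exists_ne_bot_notMem fun M hM => ?_
  obtain ⟨π, a, hπ, hπF, hπM⟩ := exists_irreducible_dvd_eval_not_dvd hF
    (M := M * D * ∏ x, E x) (by simp [hM, hD, Finset.prod_ne_zero_iff, hE])
  have hbot : Ideal.span {π} ≠ ⊥ := by simpa using hπ.ne_zero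
  refine ⟨Ideal.span {π}, ⟨hbot, (Ideal.span_singleton_prime hπ.ne_zero).mpr hπ.prime,
    fun σ => ⟨?_, fun i j _ => ?_⟩⟩, hbot, fun h => hπM ?_⟩
  · intro i j i' j' hij hij' hne hmem
    exact hπM (dvd_mul_of_dvd_left (dvd_mul_of_dvd_right
      ((Ideal.mem_span_singleton.mp hmem).trans (hdvdD σ i j i' j' hij hij' hne)) _) _)
  · refine isKthPowerResidue_span_of_dvd_eval hπ hπF (hEP (σ, i, j)) (fun h => hπM ?_) e
    exact dvd_mul_of_dvd_right (h.trans (Finset.dvd_prod_of_mem E (Finset.mem_univ _))) _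
  · exact dvd_mul_of_dvd_left (dvd_mul_of_dvd_left (Ideal.mem_span_singleton.mp h) _) _

theorem kth_power_residue_permutation_chain_polynomial (Fq : Type*) [Field Fq] [Fintype Fq]
    (k m : ℕ) (hk : 0 < k) (hm : 0 < m) (r : Fin m → Polynomial Fq)
    (hr : ∀ σ : Equiv.Perm (Fin m), ∀ i j i' j' : Fin m, i ≤ j → i' ≤ j' →
      (i, j) ≠ (i', j') →
      (∑ l ∈ Finset.Icc i j, r (σ l)) ≠ (∑ l ∈ Finset.Icc i' j', r (σ l))) :
    {P : Ideal (Polynomial Fq) | P ≠ ⊥ ∧ P.IsPrime ∧ IsPermutationChain k P r}.Infinite :=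
  kth_power_residue_permutation_chain_polynomial_general Fq k m hk r hr
end

section
/- For all positive integers k and m, the sequence 1, 2, 2^2, ..., 2^{m-1} is an m-term permutation chain of kth power residue modulo p for infinitely many prime numbers p. -/
/-!
Take a prime `p ≡ -1` modulo `8 · k · (2 ^ m)!` with `p ≥ 2 ^ m` (Dirichlet). The interval sums of
any rearrangement of `1, 2, …, 2 ^ (m - 1)` are sums of distinct powers of two, hence distinct
integers below `2 ^ m ≤ p`, so they stay distinct modulo `p`. Every natural number below `2 ^ m` is a
square modulo `p`: `2` is one since `p ≡ 7 mod 8`, and so is every odd prime `q < 2 ^ m`, by quadratic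
reciprocity, since `p ≡ 3 mod 4` and `p ≡ -1 mod q`. Finally `k ∣ p + 1` forces
`gcd k (p - 1) ∣ 2`, which makes every square modulo `p` a `k`th power.
-/

open Finset Nat

theorem isPermutationChain_of_subset_sums {A : Type*} [CommRing A] {k m : ℕ} {P : Ideal A}
    {r : Fin m → A} (hinj : ∀ s t : Finset (Fin m), s ≠ t → ∑ l ∈ s, r l - ∑ l ∈ t, r l ∉ P)
    (hres : ∀ s : Finset (Fin m), s.Nonempty → IsKthPowerResidue k P (∑ l ∈ s, r l)) :
    IsPermutationChain k P r := by
  intro σ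
  have hmap (i j : Fin m) : ∑ l ∈ Icc i j, r (σ l) = ∑ l ∈ (Icc i j).map σ.toEmbedding, r l :=
    (sum_map (Icc i j) σ.toEmbedding r).symm
  refine ⟨fun i j i' j' hij _ hne => ?_, fun i j hij => ?_⟩
  · rw [hmap, hmap]
    refine hinj _ _ fun h => hne ?_
    have hIcc : Set.Icc i j = Set.Icc i' j' := by
      rw [← coe_Icc, ← coe_Icc, map_injective _ h]
    obtain ⟨rfl, rfl⟩ := (Set.Icc_eq_Icc_iff hij).mp hIcc
    rfl
  · rw [hmap]
    exact hres _ (by simpa using hij)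

theorem Fin.sum_two_pow_lt {m : ℕ} (s : Finset (Fin m)) : ∑ l ∈ s, 2 ^ (l : ℕ) < 2 ^ m := by
  simpa [sum_map] using Nat.geomSum_lt le_rfl (s := s.map Fin.valEmbedding) (n := m) (by simp)

theorem Fin.sum_two_pow_injective {m : ℕ} :
    Function.Injective fun s : Finset (Fin m) => ∑ l ∈ s, 2 ^ (l : ℕ) := fun s t h =>
  map_injective Fin.valEmbedding (Finset.geomSum_injective le_rfl (by simpa [sum_map] using h))

theorem Int.natCast_sub_notMem_span_of_lt {a b p : ℕ} (ha : a < p) (hb : b < p) (hab : a ≠ b) :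
    (a : ℤ) - b ∉ Ideal.span {(p : ℤ)} := by
  rw [Ideal.mem_span_singleton]
  intro hdvd
  have := Int.eq_zero_of_abs_lt_dvd hdvd (by rw [abs_sub_lt_iff]; omega)
  omega

theorem isKthPowerResidue_span_natCast_of_pow_eq {p k : ℕ} {c : ℤ} (x : ZMod p)
    (hx : x ^ k = c) : IsKthPowerResidue k (Ideal.span {(p : ℤ)}) c := by
  refine ⟨x.cast, ?_⟩
  rw [Ideal.mem_span_singleton, ← ZMod.intCast_zmod_eq_zero_iff_dvd]
  push_cast [ZMod.intCast_zmod_cast, hx]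
  exact sub_self _

theorem exists_pow_eq_pow_of_gcd_card_dvd {G : Type*} [Group G] {k n : ℕ}
    (h : k.gcd (Nat.card G) ∣ n) (x : G) : ∃ y : G, y ^ k = x ^ n := by
  obtain ⟨e, rfl⟩ := h
  refine ⟨(x ^ e) ^ k.gcdA (Nat.card G), ?_⟩
  -- Bézout: `gcd k |G| = k * gcdA + |G| * gcdB`, and `(x ^ e) ^ |G| = 1`.
  rw [mul_comm, pow_mul, ← zpow_natCast (x ^ e), Nat.gcd_eq_gcd_ab, zpow_add, zpow_mul (x ^ e),
    zpow_mul (x ^ e) (Nat.card G : ℤ), zpow_natCast (x ^ e) (Nat.card G), pow_card_eq_one',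
    one_zpow, mul_one, ← zpow_natCast, ← zpow_mul, ← zpow_mul, mul_comm]

theorem ZMod.exists_pow_eq_of_isSquare {p k : ℕ} [Fact p.Prime] (hk : k ∣ p + 1) {c : ZMod p}
    (hc : IsSquare c) : ∃ x : ZMod p, x ^ k = c := by
  obtain ⟨w, rfl⟩ := hc
  rcases eq_or_ne w 0 with rfl | hw
  · have hk0 : k ≠ 0 := by rintro rfl; simp at hk
    exact ⟨0, by simp [hk0]⟩
  have hp := (Fact.out : p.Prime).two_le
  have hgcd : k.gcd (Nat.card (ZMod p)ˣ) ∣ 2 := by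
    rw [Nat.card_eq_fintype_card, ZMod.card_units]
    have := Nat.dvd_sub ((Nat.gcd_dvd_left _ _).trans hk) (Nat.gcd_dvd_right k (p - 1))
    rwa [show p + 1 - (p - 1) = 2 by omega] at this
  obtain ⟨y, hy⟩ := exists_pow_eq_pow_of_gcd_card_dvd hgcd (Units.mk0 w hw)
  exact ⟨y, by simpa [sq] using congrArg Units.val hy⟩

theorem ZMod.isSquare_natCast_prime_of_dvd_add_one {p q : ℕ} [Fact p.Prime] [hq : Fact q.Prime]
    (h8 : 8 ∣ p + 1) (hqp : q ∣ p + 1) : IsSquare (q : ZMod p) := by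
  rcases hq.out.eq_two_or_odd with rfl | hodd
  · simpa using (ZMod.exists_sq_eq_two_iff (by omega : p ≠ 2)).mpr (by omega)
  have hpq : (p : ZMod q) = -1 :=
    eq_neg_of_add_eq_zero_left (by exact_mod_cast (ZMod.natCast_eq_zero_iff _ _).mpr hqp)
  rcases Nat.odd_mod_four_iff.mp hodd with hq1 | hq3
  · refine (ZMod.exists_sq_eq_prime_iff_of_mod_four_eq_one hq1 (by omega)).mp ?_
    rw [hpq, ZMod.exists_sq_eq_neg_one_iff]
    omega
  · have hne : p ≠ q := by
      rintro rfl
      exact hq.out.one_lt.ne' (Nat.dvd_one.mp ((Nat.dvd_add_right dvd_rfl).mp hqp))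
    refine (ZMod.exists_sq_eq_prime_iff_of_mod_four_eq_three (by omega) hq3 hne).mpr ?_
    rw [hpq, ZMod.exists_sq_eq_neg_one_iff]
    omega

theorem ZMod.isSquare_natCast_of_factorial_dvd {p n : ℕ} [Fact p.Prime] (h8 : 8 ∣ p + 1)
    (hn : n ! ∣ p + 1) {c : ℕ} (hc : c ≤ n) : IsSquare (c : ZMod p) := by
  induction c using Nat.recOnMul with
  | zero => exact ⟨0, by simp⟩
  | one => exact ⟨1, by simp⟩
  | prime q hq =>
    have := Fact.mk hq
    exact isSquare_natCast_prime_of_dvd_add_one h8 ((Nat.dvd_factorial hq.pos hc).trans hn)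
  | mul a b iha ihb =>
    rcases Nat.eq_zero_or_pos a with rfl | ha
    · simp
    rcases Nat.eq_zero_or_pos b with rfl | hb
    · simp
    rw [Nat.cast_mul]
    exact (iha ((Nat.le_mul_of_pos_right a hb).trans hc)).mul
      (ihb ((Nat.le_mul_of_pos_left b ha).trans hc))

theorem isPermutationChain_two_pow {p k m : ℕ} [Fact p.Prime] (hk : k ∣ p + 1) (h8 : 8 ∣ p + 1)
    (hm : (2 ^ m)! ∣ p + 1) (hpm : 2 ^ m ≤ p) :
    IsPermutationChain k (Ideal.span {(p : ℤ)}) (fun i : Fin m => (2 : ℤ) ^ (i : ℕ)) := by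
  have hcast (s : Finset (Fin m)) : ∑ l ∈ s, (2 : ℤ) ^ (l : ℕ) = (∑ l ∈ s, 2 ^ (l : ℕ) : ℕ) := by
    push_cast; rfl
  refine isPermutationChain_of_subset_sums (fun s t hst => ?_) (fun s _ => ?_)
  · rw [hcast, hcast]
    exact Int.natCast_sub_notMem_span_of_lt ((Fin.sum_two_pow_lt s).trans_le hpm)
      ((Fin.sum_two_pow_lt t).trans_le hpm) (Fin.sum_two_pow_injective.ne hst)
  · obtain ⟨x, hx⟩ := ZMod.exists_pow_eq_of_isSquare hk
      (ZMod.isSquare_natCast_of_factorial_dvd h8 hm (Fin.sum_two_pow_lt s).le)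
    exact isKthPowerResidue_span_natCast_of_pow_eq x (by rw [hcast, hx]; push_cast; rfl)

theorem vegh_powers_of_two_permutation_chain_general (k m : ℕ) (hk : 0 < k) :
    {p : ℕ | p.Prime ∧
      IsPermutationChain k (Ideal.span {(p : ℤ)}) (fun i : Fin m => (2 : ℤ) ^ (i : ℕ))}.Infinite := by
  set N := 8 * k * (2 ^ m)!
  have : NeZero N := ⟨by positivity⟩
  refine ((Nat.infinite_setOfPred_prime_and_eq_mod (q := N) isUnit_one.neg).sdiff
    (Set.finite_Iio (2 ^ m))).mono ?_
  rintro p ⟨⟨hp, hpN⟩, hpm⟩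
  have := Fact.mk hp
  have hN : N ∣ p + 1 := by
    rw [← ZMod.natCast_eq_zero_iff]
    push_cast [hpN]
    ring
  exact ⟨hp, isPermutationChain_two_pow ((dvd_mul_left k 8).mul_right _ |>.trans hN)
    ((dvd_mul_right 8 k).mul_right _ |>.trans hN) ((dvd_mul_left _ _).trans hN)
    (not_lt.mp hpm)⟩

theorem vegh_powers_of_two_permutation_chain (k m : ℕ) (hk : 0 < k) (hm : 0 < m) :
    {p : ℕ | p.Prime ∧
      IsPermutationChain k (Ideal.span {(p : ℤ)}) (fun i : Fin m => (2 : ℤ) ^ (i : ℕ))}.Infinite :=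
  vegh_powers_of_two_permutation_chain_general k m hk
end

section
/- Let K be a number field with ring of integers O_K and let k and m be positive integers. Then there exist elements r_1, ..., r_m of O_K such that the set of nonzero prime ideals P of O_K for which r_1, ..., r_m is an m-term permutation chain of kth power residue modulo P is infinite. In fact, for any prime number p, the sequence r_i = p^{i-1} (i = 1, ..., m), viewed in O_K, has this property. -/
/-!
Take primes `q ≡ -1 (mod 8 k (p ^ m)!)` with `q > p ^ m` (Dirichlet) and a prime `P` above each.
The interval sums of a permuted chain `p ^ σ(l)` are sums of distinct powers of `p` with
exponents `< m`, hence pairwise distinct integers in `[1, p ^ m)` by uniqueness of base-`p`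
expansions, so they stay distinct modulo `q`. Each such sum `N` divides `(p ^ m)!`, hence
`q + 1`. As `q ≡ 7 (mod 8)`, `2` is a square mod `q`, and by quadratic reciprocity so is every
odd divisor of `q + 1`; hence `N` is a square. Finally `gcd (k, q - 1) ∣ gcd (q + 1, q - 1) = 2`,
and in a finite group `G` every `y ^ gcd (k, |G|)` is a `k`th power (Bézout), so every nonzero
square mod `q` is a `k`th power.
-/

open Finset

theorem exists_pow_eq_pow_gcd_card {G : Type*} [Group G] [Finite G] (k : ℕ) (y : G) :
    ∃ x : G, x ^ k = y ^ Nat.gcd k (Nat.card G) := by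
  refine ⟨y ^ Nat.gcdA k (Nat.card G), ?_⟩
  rw [← zpow_natCast, ← zpow_mul, ← zpow_natCast, Nat.gcd_eq_gcd_ab, zpow_add,
    zpow_mul y (Nat.card G : ℤ), zpow_natCast, pow_card_eq_one', one_zpow, mul_one, mul_comm]

theorem exists_pow_eq_sq_of_gcd_card_dvd_two {G : Type*} [Group G] [Finite G] {k : ℕ}
    (hk : Nat.gcd k (Nat.card G) ∣ 2) (y : G) : ∃ x : G, x ^ k = y ^ 2 := by
  obtain ⟨c, hc⟩ := hk
  rw [hc, pow_mul']
  exact exists_pow_eq_pow_gcd_card k (y ^ c)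

namespace ZMod

open scoped NumberTheorySymbols

variable {q : ℕ} [Fact q.Prime]

theorem exists_pow_eq_of_dvd_add_one {k : ℕ} (hk : k ∣ q + 1) {a : ZMod q} (ha : IsSquare a)
    (ha0 : a ≠ 0) : ∃ x : ZMod q, x ^ k = a := by
  obtain ⟨y, rfl⟩ := ha
  have hgcd : Nat.gcd k (Nat.card (ZMod q)ˣ) ∣ 2 := by
    have hq := (Fact.out : q.Prime).one_lt
    rw [Nat.card_eq_fintype_card, card_units, ← show q + 1 - (q - 1) = 2 by omega]
    exact Nat.dvd_sub ((Nat.gcd_dvd_left _ _).trans hk) (Nat.gcd_dvd_right _ _)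
  have hy : y ≠ 0 := by rintro rfl; simp at ha0
  obtain ⟨x, hx⟩ := exists_pow_eq_sq_of_gcd_card_dvd_two hgcd (Units.mk0 y hy)
  exact ⟨x, by simpa [sq] using congrArg Units.val hx⟩

theorem isSquare_natCast_of_odd_of_dvd_add_one (hq4 : q % 4 = 3) {b : ℕ} (hb : Odd b)
    (hbq : b ∣ q + 1) : IsSquare (b : ZMod q) := by
  have hqb : J(q | b) = χ₄ b := by
    have : (q : ℤ) ≡ -1 [ZMOD b] :=
      Int.modEq_iff_dvd.mpr (by simpa [sub_eq_add_neg, add_comm] using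
        (Int.natCast_dvd_natCast.mpr hbq).neg_right)
    rw [jacobiSym.mod_left' this, jacobiSym.at_neg_one hb]
  have hq : Odd q := Nat.odd_iff.mpr (by omega)
  suffices J(b | q) = 1 by simpa using isSquare_of_jacobiSym_eq_one this
  rcases Nat.odd_mod_four_iff.mp (Nat.odd_iff.mp hb) with hb4 | hb4
  · rw [jacobiSym.quadratic_reciprocity_one_mod_four hb4 hq, hqb, χ₄_nat_one_mod_four hb4]
  · rw [jacobiSym.quadratic_reciprocity_three_mod_four hb4 hq4, hqb,
      χ₄_nat_three_mod_four hb4, neg_neg]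

theorem isSquare_natCast_of_dvd_add_one (hq8 : q % 8 = 7) {N : ℕ} (hN : N ∣ q + 1) :
    IsSquare (N : ZMod q) := by
  obtain ⟨v, b, hb, rfl⟩ :=
    Nat.exists_eq_two_pow_mul_odd (ne_zero_of_dvd_ne_zero q.succ_ne_zero hN)
  have h2 : IsSquare (2 : ZMod q) := (exists_sq_eq_two_iff (by omega)).mpr (Or.inr hq8)
  push_cast
  exact (h2.pow v).mul
    (isSquare_natCast_of_odd_of_dvd_add_one (by omega) hb ((Dvd.intro_left _ rfl).trans hN))

theorem exists_pow_eq_natCast (h8 : 8 ∣ q + 1) {k N : ℕ} (hk : k ∣ q + 1) (hN : N ∣ q + 1) :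
    ∃ x : ZMod q, x ^ k = N := by
  refine exists_pow_eq_of_dvd_add_one hk (isSquare_natCast_of_dvd_add_one (by omega) hN) ?_
  rw [Ne, natCast_eq_zero_iff]
  intro hqN
  have : q ∣ 1 := (Nat.dvd_add_right dvd_rfl).mp (hqN.trans hN)
  exact (Fact.out : q.Prime).one_lt.ne' (Nat.dvd_one.mp this)

end ZMod

namespace Ideal

variable {A : Type*} [CommRing A] {P : Ideal A} {q : ℕ}

theorem charP_quotient_of_natCast_mem (hP : P ≠ ⊤) (hq : q.Prime) (hqP : (q : A) ∈ P) :
    CharP (A ⧸ P) q :=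
  have := Quotient.nontrivial_iff.mpr hP
  (CharP.charP_iff_prime_eq_zero hq).mpr
    (by rwa [← map_natCast (Quotient.mk P), Quotient.eq_zero_iff_mem])

theorem natCast_mem_iff_dvd (hP : P ≠ ⊤) (hq : q.Prime) (hqP : (q : A) ∈ P) (n : ℕ) :
    (n : A) ∈ P ↔ q ∣ n := by
  have := charP_quotient_of_natCast_mem hP hq hqP
  rw [← Quotient.eq_zero_iff_mem, map_natCast, CharP.cast_eq_zero_iff (A ⧸ P) q]

theorem natCast_sub_natCast_mem_iff (hP : P ≠ ⊤) (hq : q.Prime) (hqP : (q : A) ∈ P)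
    (a b : ℕ) : (a : A) - b ∈ P ↔ a ≡ b [MOD q] := by
  have := charP_quotient_of_natCast_mem hP hq hqP
  rw [← Quotient.eq_zero_iff_mem, map_sub, map_natCast, map_natCast, sub_eq_zero,
    CharP.natCast_eq_natCast (A ⧸ P) q]

theorem isKthPowerResidue_natCast (hP : P ≠ ⊤) (hq : q.Prime) (hqP : (q : A) ∈ P) {k N : ℕ}
    (h : ∃ x : ZMod q, x ^ k = N) : IsKthPowerResidue k P N := by
  have := charP_quotient_of_natCast_mem hP hq hqP
  have : Fact q.Prime := ⟨hq⟩
  obtain ⟨x, hx⟩ := h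
  refine ⟨x.val, ?_⟩
  rw [← Quotient.eq_zero_iff_mem, map_sub, map_pow, map_natCast, map_natCast, ZMod.natCast_val]
  simpa using congrArg (ZMod.castHom (dvd_refl q) (A ⧸ P)) (sub_eq_zero.mpr hx)

end Ideal

theorem Finset.sum_pow_comp_injective {ι : Type*} {p : ℕ} (hp : 2 ≤ p) {e : ι → ℕ}
    (he : Function.Injective e) : Function.Injective fun s : Finset ι => ∑ i ∈ s, p ^ e i := by
  intro s t h
  have : ∑ n ∈ s.map ⟨e, he⟩, p ^ n = ∑ n ∈ t.map ⟨e, he⟩, p ^ n := by simpa using h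
  exact map_injective _ (geomSum_injective hp this)

theorem isPermutationChain_natCast_pow {A : Type*} [CommRing A] {P : Ideal A} (hP : P ≠ ⊤)
    {k m p q : ℕ} (hp : 2 ≤ p) (hq : q.Prime) (hqP : (q : A) ∈ P) (hpq : p ^ m < q)
    (h8 : 8 ∣ q + 1) (hk : k ∣ q + 1) (hfac : (p ^ m).factorial ∣ q + 1) :
    IsPermutationChain k P (fun i : Fin m => (p : A) ^ (i : ℕ)) := by
  have : Fact q.Prime := ⟨hq⟩
  intro σ
  set N : Fin m → Fin m → ℕ := fun i j => ∑ l ∈ Icc i j, p ^ (σ l : ℕ) with hN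
  have hcast (i j : Fin m) : ∑ l ∈ Icc i j, (p : A) ^ (σ l : ℕ) = N i j := by
    push_cast [hN]; rfl
  have hlt (i j : Fin m) : N i j < p ^ m := by
    simpa using Nat.geomSum_lt hp (n := m)
      (s := (Icc i j).map (σ.toEmbedding.trans Fin.valEmbedding))
      fun _ he => by obtain ⟨l, -, rfl⟩ := mem_map.mp he; exact (σ l).is_lt
  have hpos (i j : Fin m) (hij : i ≤ j) : 0 < N i j :=
    sum_pos (fun _ _ => pow_pos (by omega) _) ⟨i, mem_Icc.mpr ⟨le_rfl, hij⟩⟩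
  refine ⟨fun i j i' j' hij _ hne => ?_, fun i j hij => ?_⟩
  · rw [hcast, hcast, Ideal.natCast_sub_natCast_mem_iff hP hq hqP]
    intro hmod
    have hIcc : Icc i j = Icc i' j' :=
      sum_pow_comp_injective hp (Fin.val_injective.comp σ.injective)
        (hmod.eq_of_lt_of_lt ((hlt i j).trans hpq) ((hlt i' j').trans hpq))
    rw [← coe_inj, coe_Icc, coe_Icc, Set.Icc_eq_Icc_iff hij] at hIcc
    exact hne (Prod.ext hIcc.1 hIcc.2)
  · rw [hcast]
    exact Ideal.isKthPowerResidue_natCast hP hq hqP (ZMod.exists_pow_eq_natCast h8 hk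
      ((Nat.dvd_factorial (hpos i j hij) (hlt i j).le).trans hfac))

theorem exists_isPrime_natCast_mem (S : Type*) [CommRing S] [CharZero S]
    [Algebra.IsIntegral ℤ S] {q : ℕ} (hq : q.Prime) :
    ∃ P : Ideal S, P ≠ ⊥ ∧ P.IsPrime ∧ (q : S) ∈ P := by
  have : (Ideal.span {(q : ℤ)}).IsPrime :=
    (Ideal.span_singleton_prime (by exact_mod_cast hq.ne_zero)).mpr
      (Nat.prime_iff_prime_int.mp hq)
  obtain ⟨⟨P, hP, hPq⟩⟩ := Ideal.nonempty_primesOver (S := S) (Ideal.span {(q : ℤ)})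
  have hqP : (q : S) ∈ P := by
    have : (q : ℤ) ∈ P.under ℤ := by
      rw [← (Ideal.liesOver_iff _ _).mp hPq]; exact Ideal.mem_span_singleton_self _
    simpa using this
  exact ⟨P, fun h => hq.ne_zero (by simpa [h] using hqP), hP, hqP⟩

theorem infinite_setOf_isPermutationChain_natCast_pow (S : Type*) [CommRing S] [CharZero S]
    [Algebra.IsIntegral ℤ S] {k p : ℕ} (hk : 0 < k) (hp : 2 ≤ p) (m : ℕ) :
    {P : Ideal S | P ≠ ⊥ ∧ P.IsPrime ∧
      IsPermutationChain k P (fun i : Fin m => (p : S) ^ (i : ℕ))}.Infinite := by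
  set M := 8 * k * (p ^ m).factorial
  have : NeZero M := ⟨by positivity⟩
  set Q := {q : ℕ | q.Prime ∧ (q : ZMod M) = -1} \ Set.Iic (p ^ m)
  have hQ : Q.Infinite :=
    (Nat.infinite_setOfPred_prime_and_eq_mod isUnit_one.neg).sdiff (Set.finite_Iic _)
  have hex : ∀ q ∈ Q, ∃ P : Ideal S, (P ≠ ⊥ ∧ P.IsPrime ∧
      IsPermutationChain k P (fun i : Fin m => (p : S) ^ (i : ℕ))) ∧ (q : S) ∈ P := by
    rintro q ⟨⟨hq, hqM⟩, hqm⟩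
    have hMq : M ∣ q + 1 := (ZMod.natCast_eq_zero_iff _ _).mp (by push_cast [hqM]; ring)
    obtain ⟨P, hP0, hP, hqP⟩ := exists_isPrime_natCast_mem S hq
    refine ⟨P, ⟨hP0, hP, isPermutationChain_natCast_pow hP.ne_top hp hq hqP (not_le.mp hqm)
      (((dvd_mul_right 8 k).mul_right _).trans hMq) (((dvd_mul_left k 8).mul_right _).trans hMq)
      ((dvd_mul_left _ _).trans hMq)⟩, hqP⟩
  choose! f hf hqf using hex
  refine Set.infinite_of_injOn_mapsTo (fun a ha b hb hab => ?_) hf hQ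
  have hbP := hqf b hb
  rw [← hab, Ideal.natCast_mem_iff_dvd (hf a ha).2.1.ne_top ha.1.1 (hqf a ha)] at hbP
  exact (Nat.prime_dvd_prime_iff_eq ha.1.1 hb.1.1).mp hbP

theorem exists_permutation_chain_numberField_general (K : Type*) [Field K] [NumberField K]
    (k m : ℕ) (hk : 0 < k) :
    (∃ r : Fin m → NumberField.RingOfIntegers K,
      {P : Ideal (NumberField.RingOfIntegers K) |
        P ≠ ⊥ ∧ P.IsPrime ∧ IsPermutationChain k P r}.Infinite) ∧
    ∀ p : ℕ, p.Prime →
      {P : Ideal (NumberField.RingOfIntegers K) |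
        P ≠ ⊥ ∧ P.IsPrime ∧
          IsPermutationChain k P
            (fun i : Fin m => (p : NumberField.RingOfIntegers K) ^ (i : ℕ))}.Infinite := by
  have h (p : ℕ) (hp : p.Prime) :=
    infinite_setOf_isPermutationChain_natCast_pow (NumberField.RingOfIntegers K) hk hp.two_le m
  exact ⟨⟨_, h 2 Nat.prime_two⟩, h⟩

theorem exists_permutation_chain_numberField (K : Type*) [Field K] [NumberField K]
    (k m : ℕ) (hk : 0 < k) (hm : 0 < m) :
    (∃ r : Fin m → NumberField.RingOfIntegers K,
      {P : Ideal (NumberField.RingOfIntegers K) |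
        P ≠ ⊥ ∧ P.IsPrime ∧ IsPermutationChain k P r}.Infinite) ∧
    ∀ p : ℕ, p.Prime →
      {P : Ideal (NumberField.RingOfIntegers K) |
        P ≠ ⊥ ∧ P.IsPrime ∧
          IsPermutationChain k P
            (fun i : Fin m => (p : NumberField.RingOfIntegers K) ^ (i : ℕ))}.Infinite :=
  exists_permutation_chain_numberField_general K k m hk
end

section
/- Let K be a number field with ring of integers O_K, let k be a positive integer, and let E be a finite set of pairwise distinct nonzero elements of O_K. Then there exist infinitely many nonzero prime ideals P of O_K such that every element of E is a kth power residue modulo P and the elements of E are pairwise incongruent modulo P. -/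
/-!
Adjoin to `K` a `k`-th root of every `c ∈ E`, getting a number field `L`. Whenever a ring
homomorphism `φ : 𝓞 L → 𝔽_p` exists, `P = ker (φ|_{𝓞 K})` is a prime of norm `p` modulo which
each `c = y ^ k` is the `k`-th power of any lift of `φ y`; for `p` prime to the norm of
`∏ (c - c')` the elements of `E` stay distinct modulo `P`. Such `φ` exist for infinitely many `p`:
for an integral primitive element `θ` of `L` with minimal polynomial `f`, Schur's theorem gives
infinitely many primes `p` for which `f` has a root modulo `p`, and for `p` prime to the conductor
of `ℤ[θ]` the Kummer–Dedekind isomorphism `𝓞 L / p ≃ 𝔽_p[X] / (f)` turns such a root into `φ`.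
-/

open Polynomial NumberField IntermediateField Ideal

namespace Polynomial

theorem finite_setOf_eval_mem_s10 {R : Type*} [CommRing R] [IsDomain R] {f : R[X]}
    (hf : 0 < f.natDegree) {s : Set R} (hs : s.Finite) : {x | f.eval x ∈ s}.Finite := by
  refine (hs.biUnion fun a _ => finite_setOfPred_isRoot (p := f - C a) ?_).subset fun x hx => ?_
  · intro h
    have := natDegree_sub_C (p := f) (a := a)
    rw [h, natDegree_zero] at this
    omega
  · exact Set.mem_biUnion hx (by simp)

theorem exists_prime_gt_dvd_eval (f : ℤ[X]) (hf : 0 < f.natDegree) (B : ℕ) :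
    ∃ p, B < p ∧ p.Prime ∧ ∃ n, (p : ℤ) ∣ f.eval n := by
  by_cases hc : f.eval 0 = 0
  · obtain ⟨p, hBp, hp⟩ := Nat.exists_infinite_primes (B + 1)
    exact ⟨p, hBp, hp, 0, by rw [hc]; exact dvd_zero _⟩
  set c := f.eval 0
  set N : ℤ := c * B.factorial
  have hN : N ≠ 0 := mul_ne_zero hc (by positivity)
  obtain ⟨t, ht⟩ := (finite_setOf_eval_mem_s10 (f := f.comp (C N * X))
    (by rw [natDegree_comp, natDegree_C_mul_X N hN, mul_one]; exact hf)
    (Set.toFinite {c, -c})).exists_notMem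
  -- `N t ∣ f (N t) - f 0` makes `f (N t) = c u` with `u ≡ 1 mod B!`
  obtain ⟨u, hu, hu1⟩ : ∃ u, f.eval (N * t) = c * u ∧ (B.factorial : ℤ) ∣ u - 1 := by
    obtain ⟨s, hs⟩ := sub_dvd_eval_sub (N * t) 0 f
    exact ⟨1 + B.factorial * t * s, by linear_combination hs, t * s, by ring⟩
  have hu_ne : u.natAbs ≠ 1 := fun h => ht <| by
    rcases Int.natAbs_eq_iff.mp h with h | h <;> simp [eval_comp, hu, h]
  have hq := Nat.minFac_prime hu_ne
  have hqu : (u.natAbs.minFac : ℤ) ∣ u := Int.natCast_dvd.mpr (Nat.minFac_dvd _)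
  refine ⟨u.natAbs.minFac, not_le.mp fun hqB => hq.one_lt.ne' ?_, hq, N * t, hu ▸ hqu.mul_left c⟩
  have hq1 : (u.natAbs.minFac : ℤ) ∣ 1 := by
    simpa using dvd_sub hqu ((Int.natCast_dvd_natCast.mpr (Nat.dvd_factorial hq.pos hqB)).trans hu1)
  exact_mod_cast Int.eq_one_of_dvd_one (by positivity) hq1

theorem infinite_setOf_prime_dvd_eval (f : ℤ[X]) (hf : 0 < f.natDegree) :
    {p : ℕ | p.Prime ∧ ∃ n, (p : ℤ) ∣ f.eval n}.Infinite :=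
  Set.infinite_of_forall_exists_gt fun B =>
    let ⟨p, hBp, hp⟩ := exists_prime_gt_dvd_eval f hf B
    ⟨p, hp, hBp⟩

end Polynomial

theorem Ideal.absNorm_ker_ringHom_zmod {S : Type*} [CommRing S] [IsDedekindDomain S]
    [Module.Free ℤ S] {n : ℕ} (ψ : S →+* ZMod n) : absNorm (RingHom.ker ψ) = n := by
  rw [absNorm_apply, Submodule.cardQuot_apply]
  exact (Nat.card_congr (RingHom.quotientKerEquivOfSurjective
    (ZMod.ringHom_surjective ψ)).toEquiv).trans (Nat.card_zmod n)

theorem NumberField.exists_primitive_element_ringOfIntegers (L : Type*) [Field L]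
    [NumberField L] : ∃ θ : 𝓞 L, ℚ⟮(θ : L)⟯ = ⊤ := by
  obtain ⟨α, hα⟩ := Field.exists_primitive_element ℚ L
  obtain ⟨m, hm, hint⟩ := exists_integral_multiples ℤ ℚ {α}
  have hα_mem : α ∈ ℚ⟮m • α⟯ := by
    convert smul_mem _ (mem_adjoin_simple_self ℚ (m • α)) (x := (m : ℚ)⁻¹) using 1
    rw [← Int.cast_smul_eq_zsmul ℚ, smul_smul, inv_mul_cancel₀ (by exact_mod_cast hm), one_smul]
  exact ⟨⟨m • α, hint α (Finset.mem_singleton_self α)⟩,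
    top_unique (hα ▸ adjoin_simple_le_iff.mpr hα_mem)⟩

namespace RingOfIntegers

variable {L : Type*} [Field L] [NumberField L]

theorem aeval_derivative_minpoly_ne_zero (θ : 𝓞 L) :
    aeval θ (derivative (minpoly ℤ θ)) ≠ 0 := by
  have h := (Algebra.IsSeparable.isSeparable ℚ (θ : L)).aeval_derivative_ne_zero
    (minpoly.aeval ℚ (θ : L))
  rw [minpoly.isIntegrallyClosed_eq_field_fractions' ℚ (θ.isIntegral.algebraMap (B := L)),
    derivative_map, aeval_map_algebraMap, aeval_algebraMap_apply] at h
  rwa [NumberField.RingOfIntegers.minpoly_coe, ne_eq,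
    map_eq_zero_iff _ (FaithfulSMul.algebraMap_injective _ _)] at h

theorem exponent_ne_zero {θ : 𝓞 L} (hθ : ℚ⟮(θ : L)⟯ = ⊤) : exponent θ ≠ 0 := by
  have hθ' := Algebra.adjoin_eq_top_of_primitive_element (Algebra.IsAlgebraic.isAlgebraic _) hθ
  -- conductor · different = (f'(θ)) and `f'(θ) ≠ 0`
  have hc : conductor ℤ θ ≠ ⊥ := fun h => aeval_derivative_minpoly_ne_zero θ <| by
    simpa [h] using (conductor_mul_differentIdeal ℤ ℚ L θ hθ').symm
  exact absNorm_eq_zero_iff.not.mpr (under_ne_bot ℤ hc)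

theorem nonempty_ringHom_zmod_of_isRoot {θ : 𝓞 L} {p : ℕ} [Fact p.Prime]
    (hp : ¬ p ∣ exponent θ) {n : ZMod p}
    (hn : ((minpoly ℤ θ).map (Int.castRingHom (ZMod p))).IsRoot n) :
    Nonempty (𝓞 L →+* ZMod p) :=
  ⟨(Ideal.Quotient.lift _ (evalRingHom n) fun _ hg =>
      (hn.dvd (mem_span_singleton.mp hg)).eq_zero).comp
    ((ZModXQuotSpanEquivQuotSpan hp).symm.toRingHom.comp (Ideal.Quotient.mk _))⟩

end RingOfIntegers

namespace NumberField

theorem infinite_setOf_prime_nonempty_ringHom_zmod (L : Type*) [Field L] [NumberField L] :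
    {p : ℕ | p.Prime ∧ Nonempty (𝓞 L →+* ZMod p)}.Infinite := by
  obtain ⟨θ, hθ⟩ := exists_primitive_element_ringOfIntegers L
  have hfin : {p : ℕ | p ∣ RingOfIntegers.exponent θ}.Finite :=
    (RingOfIntegers.exponent θ).divisors.finite_toSet.subset fun p hp =>
      Nat.mem_divisors.mpr ⟨hp, RingOfIntegers.exponent_ne_zero hθ⟩
  refine ((infinite_setOf_prime_dvd_eval (minpoly ℤ θ)
    (minpoly.natDegree_pos θ.isIntegral)).sdiff hfin).mono ?_
  rintro p ⟨⟨hp, n, hn⟩, hpθ⟩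
  have : Fact p.Prime := ⟨hp⟩
  refine ⟨hp, RingOfIntegers.nonempty_ringHom_zmod_of_isRoot hpθ (n := n) ?_⟩
  rwa [IsRoot, eval_intCast_map, Int.coe_castRingHom, ZMod.intCast_zmod_eq_zero_iff_dvd]

theorem infinite_setOf_isPrime_forall_exists_pow_sub_mem
    {K B : Type*} [Field K] [NumberField K] [CommRing B] [Algebra (𝓞 K) B] (k : ℕ)
    (E : Finset (𝓞 K)) (hE : ∀ c ∈ E, ∃ y : B, y ^ k = algebraMap (𝓞 K) B c)
    (hB : {p : ℕ | p.Prime ∧ Nonempty (B →+* ZMod p)}.Infinite) :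
    {P : Ideal (𝓞 K) | P ≠ ⊥ ∧ P.IsPrime ∧
      (∀ c ∈ E, ∃ x : 𝓞 K, x ^ k - c ∈ P) ∧
      (∀ c ∈ E, ∀ c' ∈ E, c ≠ c' → c - c' ∉ P)}.Infinite := by
  classical
  set D := ∏ cc ∈ E.offDiag, (cc.1 - cc.2)
  have hD : D ≠ 0 := Finset.prod_ne_zero_iff.mpr fun cc hcc =>
    sub_ne_zero.mpr (Finset.mem_offDiag.mp hcc).2.2
  have hN : absNorm (span {D}) ≠ 0 := by
    rwa [ne_eq, absNorm_eq_zero_iff, span_singleton_eq_bot]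
  have hfin : {p | p ∣ absNorm (span {D})}.Finite :=
    (absNorm (span {D})).divisors.finite_toSet.subset fun p hp => Nat.mem_divisors.mpr ⟨hp, hN⟩
  refine Set.Infinite.of_image absNorm ((hB.sdiff hfin).mono ?_)
  rintro p ⟨⟨hp, ⟨φ⟩⟩, hpD⟩
  have : Fact p.Prime := ⟨hp⟩
  set ψ := φ.comp (algebraMap (𝓞 K) B)
  have hψ : absNorm (RingHom.ker ψ) = p := absNorm_ker_ringHom_zmod ψ
  refine ⟨RingHom.ker ψ, ⟨fun h => hp.ne_zero ?_, RingHom.ker_isPrime ψ, fun c hc => ?_,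
    fun c hc c' hc' hne hmem => hpD ?_⟩, hψ⟩
  · rw [← hψ, h, absNorm_bot]
  · obtain ⟨y, hy⟩ := hE c hc
    obtain ⟨x, hx⟩ := ZMod.ringHom_surjective ψ (φ y)
    exact ⟨x, by rw [RingHom.mem_ker, map_sub, map_pow, hx, ← map_pow, hy]; exact sub_self _⟩
  · have hDmem : D ∈ RingHom.ker ψ := (RingHom.ker ψ).mem_of_dvd
      (Finset.dvd_prod_of_mem _ (a := (c, c')) (Finset.mem_offDiag.mpr ⟨hc, hc', hne⟩)) hmem
    have := span_singleton_le_iff_mem _ |>.mpr hDmem (absNorm_mem _)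
    rwa [RingHom.mem_ker, map_natCast, ZMod.natCast_eq_zero_iff] at this

theorem exists_pow_eq_algebraMap_of_splits {K L : Type*} [Field K] [NumberField K]
    [Field L] [NumberField L] [Algebra K L] {k : ℕ} (hk : k ≠ 0) {c : 𝓞 K}
    (h : ((X ^ k - C (c : K)).map (algebraMap K L)).Splits) :
    ∃ y : 𝓞 L, y ^ k = algebraMap (𝓞 K) (𝓞 L) c := by
  obtain ⟨y, hy⟩ := Splits.exists_eval_eq_zero h (by
    rw [degree_map, degree_X_pow_sub_C (Nat.pos_of_ne_zero hk)]; exact_mod_cast hk)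
  rw [eval_map, eval₂_sub, eval₂_pow, eval₂_X, eval₂_C, sub_eq_zero] at hy
  have hc : IsIntegral ℤ (algebraMap K L c) :=
    c.isIntegral_coe.map (IsScalarTower.toAlgHom ℤ K L)
  exact ⟨⟨y, IsIntegral.of_pow (Nat.pos_of_ne_zero hk) (hy ▸ hc)⟩, RingOfIntegers.ext hy⟩

end NumberField

theorem infinitely_many_primes_kth_power_residues_numberField_general (K : Type*) [Field K]
    [NumberField K] (k : ℕ) (hk : 0 < k) (E : Finset (𝓞 K)) :
    {P : Ideal (𝓞 K) | P ≠ ⊥ ∧ P.IsPrime ∧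
      (∀ c ∈ E, ∃ x : 𝓞 K, x ^ k - c ∈ P) ∧
      (∀ c ∈ E, ∀ c' ∈ E, c ≠ c' → c - c' ∉ P)}.Infinite := by
  set g : K[X] := ∏ c ∈ E, (X ^ k - C (c : K))
  have hg : g ≠ 0 := Finset.prod_ne_zero_iff.mpr fun c _ => X_pow_sub_C_ne_zero hk _
  have : NumberField g.SplittingField := of_module_finite K _
  refine infinite_setOf_isPrime_forall_exists_pow_sub_mem k E
    (fun c hc => exists_pow_eq_algebraMap_of_splits hk.ne' ?_)
    (infinite_setOf_prime_nonempty_ringHom_zmod g.SplittingField)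
  exact Splits.of_dvd (SplittingField.splits g) (map_ne_zero hg)
    (Polynomial.map_dvd _ (Finset.dvd_prod_of_mem _ hc))

theorem infinitely_many_primes_kth_power_residues_numberField (K : Type*) [Field K]
    [NumberField K] (k : ℕ) (hk : 0 < k) (E : Finset (𝓞 K)) (hE : (0 : 𝓞 K) ∉ E) :
    {P : Ideal (𝓞 K) | P ≠ ⊥ ∧ P.IsPrime ∧
      (∀ c ∈ E, ∃ x : 𝓞 K, x ^ k - c ∈ P) ∧
      (∀ c ∈ E, ∀ c' ∈ E, c ≠ c' → c - c' ∉ P)}.Infinite :=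
  infinitely_many_primes_kth_power_residues_numberField_general K k hk E
end

section
/- Let k be a positive integer and let E be a finite set of pairwise distinct nonzero integers. Then there exist infinitely many prime numbers p such that every element of E is a kth power residue modulo p and the elements of E are pairwise incongruent modulo p. -/
/-!
Let `L` be the splitting field of `∏_{c ∈ E} (X ^ k - c)` over `ℚ` and `θ` a primitive element of
`L` that is an algebraic integer, with minimal polynomial `F ∈ ℤ[X]`. A `k`th root of `c ∈ E` lies
in `L = ℚ[θ]`, so it is `G(θ) / d` with `G ∈ ℤ[X]`, `d ∈ ℤ`, and Gauss's lemma gives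
`F ∣ G ^ k - d ^ k c`. Hence `c ≡ (G(n) / d) ^ k` modulo every prime `p ∣ F(n)` with `p ∤ d`.
By Schur's theorem infinitely many primes divide some value of `F`, and only finitely many of
them divide one of the `d` or a difference `c - c'`.
-/

open Polynomial IntermediateField

theorem Polynomial.exists_prime_gt_dvd_eval_s11 {F : ℤ[X]} (hF : 0 < F.natDegree) (N : ℕ) :
    ∃ p : ℕ, p.Prime ∧ N < p ∧ ∃ n : ℤ, (p : ℤ) ∣ F.eval n := by
  set a := F.eval 0
  rcases eq_or_ne a 0 with ha | ha
  · obtain ⟨p, hNp, hp⟩ := Nat.exists_infinite_primes (N + 1)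
    exact ⟨p, hp, hNp, 0, show (p : ℤ) ∣ a from ha ▸ dvd_zero _⟩
  set t : ℤ := a * N.factorial
  obtain ⟨s, hs⟩ : ∃ s : ℤ, F.eval (t * s) ^ 2 ≠ a ^ 2 := by
    have hH : F.comp (C t * X) ^ 2 - C (a ^ 2) ≠ 0 := by
      refine ne_zero_of_natDegree_gt (n := 0) ?_
      rw [natDegree_sub_C, natDegree_pow, natDegree_comp, natDegree_C_mul_X _
        (mul_ne_zero ha (by positivity))]
      omega
    obtain ⟨s, hs⟩ := exists_eval_ne_zero_of_natDegree_lt_card _ hH (by simp)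
    exact ⟨s, by simpa [sub_eq_zero, mul_comm] using hs⟩
  obtain ⟨u, hu⟩ : t * s ∣ F.eval (t * s) - a := by simpa using sub_dvd_eval_sub (t * s) 0 F
  -- `F (t s) ≡ F 0 = a [ZMOD a N! s]`, so `w = F (t s) / a ≡ 1` modulo every prime up to `N`,
  -- and `w ≠ ±1` by the choice of `s`
  set w : ℤ := 1 + N.factorial * s * u
  have hw : F.eval (t * s) = a * w := by linear_combination hu
  obtain ⟨p, hp, hpw⟩ := Nat.exists_prime_and_dvd (n := w.natAbs) fun h => hs (by
    rw [hw, mul_pow, ← Int.natAbs_sq w, h]; ring)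
  have hpw : (p : ℤ) ∣ w := Int.natCast_dvd.2 hpw
  refine ⟨p, hp, ?_, t * s, hw ▸ hpw.mul_left a⟩
  by_contra! hpN
  have hpN : (p : ℤ) ∣ N.factorial := Int.natCast_dvd_natCast.2 (Nat.dvd_factorial hp.pos hpN)
  have hp1 : (p : ℤ) ∣ 1 := by
    simpa [w] using dvd_sub hpw ((hpN.mul_right s).mul_right u)
  exact hp.one_lt.ne' (by exact_mod_cast Int.eq_one_of_dvd_one (by positivity) hp1)

theorem Polynomial.setOf_prime_dvd_eval_infinite {F : ℤ[X]} (hF : 0 < F.natDegree) :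
    {p : ℕ | p.Prime ∧ ∃ n : ℤ, (p : ℤ) ∣ F.eval n}.Infinite :=
  Set.infinite_of_forall_exists_gt fun N =>
    let ⟨p, hp, hNp, hpF⟩ := exists_prime_gt_dvd_eval_s11 hF N
    ⟨p, ⟨hp, hpF⟩, hNp⟩

theorem exists_pow_intModEq_of_dvd_eval {p k : ℕ} (hp : p.Prime) {F G : ℤ[X]} {c d n : ℤ}
    (hFG : F ∣ G ^ k - C (d ^ k * c)) (hpF : (p : ℤ) ∣ F.eval n) (hpd : ¬(p : ℤ) ∣ d) :
    ∃ x : ℤ, x ^ k ≡ c [ZMOD p] := by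
  have := Fact.mk hp
  have hd : (d : ZMod p) ≠ 0 := by rwa [Ne, ZMod.intCast_zmod_eq_zero_iff_dvd]
  have hG : ((G.eval n : ℤ) : ZMod p) ^ k = (d : ZMod p) ^ k * c := by
    obtain ⟨Q, hQ⟩ := hFG
    have := congrArg (fun P : ℤ[X] => ((P.eval n : ℤ) : ZMod p)) hQ
    simpa [(ZMod.intCast_zmod_eq_zero_iff_dvd _ _).2 hpF, sub_eq_zero] using this
  obtain ⟨x, hx⟩ := ZMod.intCast_surjective (((G.eval n : ℤ) : ZMod p) * (d : ZMod p)⁻¹)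
  refine ⟨x, (ZMod.intCast_eq_intCast_iff _ _ _).1 ?_⟩
  rw [Int.cast_pow, hx, mul_pow, hG, mul_right_comm, ← mul_pow, mul_inv_cancel₀ hd, one_pow,
    one_mul]

theorem exists_isIntegral_int_adjoin_simple_eq_top (L : Type*) [Field L] [Algebra ℚ L]
    [FiniteDimensional ℚ L] : ∃ θ : L, IsIntegral ℤ θ ∧ ℚ⟮θ⟯ = ⊤ := by
  obtain ⟨θ, hθ⟩ := Field.exists_primitive_element ℚ L
  have hθalg : IsAlgebraic ℤ θ :=
    (IsFractionRing.isAlgebraic_iff ℤ ℚ L).2 (Algebra.IsAlgebraic.isAlgebraic θ)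
  obtain ⟨y, hy, hint⟩ := hθalg.exists_integral_multiple
  refine ⟨y • θ, hint, eq_top_iff.2 (hθ ▸ adjoin_simple_le_iff.2 ?_)⟩
  have hθ_eq : (y : ℚ)⁻¹ • (y • θ) = θ := by
    rw [← Int.cast_smul_eq_zsmul ℚ, smul_smul, inv_mul_cancel₀ (by exact_mod_cast hy), one_smul]
  simpa only [hθ_eq] using smul_mem _ (mem_adjoin_simple_self ℚ (y • θ)) (x := (y : ℚ)⁻¹)

theorem exists_aeval_eq_zsmul_of_mem_adjoin_simple {L : Type*} [Field L] [Algebra ℚ L]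
    {θ α : L} (hθ : IsAlgebraic ℚ θ) (hα : α ∈ ℚ⟮θ⟯) :
    ∃ d : ℤ, d ≠ 0 ∧ ∃ G : ℤ[X], aeval θ G = d • α := by
  rw [← mem_toSubalgebra, adjoin_simple_toSubalgebra_of_isAlgebraic hθ,
    Algebra.adjoin_singleton_eq_range_aeval] at hα
  obtain ⟨g, rfl⟩ := hα
  obtain ⟨d, hd, hmap⟩ := IsLocalization.integerNormalization_spec (nonZeroDivisors ℤ) g
  refine ⟨d, nonZeroDivisors.ne_zero hd,
    IsLocalization.integerNormalization (nonZeroDivisors ℤ) g, ?_⟩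
  rw [← aeval_map_algebraMap ℚ, hmap, ← Int.cast_smul_eq_zsmul ℚ, map_smul,
    Int.cast_smul_eq_zsmul]
  rfl

theorem SplittingField.exists_pow_eq_algebraMap {K ι : Type*} [Field K] {k : ℕ} (hk : 0 < k)
    {s : Finset ι} (f : ι → K) {i : ι} (hi : i ∈ s) :
    ∃ α : SplittingField (∏ j ∈ s, (X ^ k - C (f j))), α ^ k = algebraMap K _ (f i) := by
  have hne : ∏ j ∈ s, (X ^ k - C (f j)) ≠ 0 :=
    Finset.prod_ne_zero_iff.2 fun j _ => X_pow_sub_C_ne_zero hk (f j)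
  have hsplit := (SplittingField.splits (∏ j ∈ s, (X ^ k - C (f j)))).of_dvd (map_ne_zero hne)
    (Polynomial.map_dvd _ (Finset.dvd_prod_of_mem _ hi))
  obtain ⟨α, hα⟩ := hsplit.exists_eval_eq_zero (by
    rw [degree_map, degree_X_pow_sub_C hk]; exact_mod_cast hk.ne')
  refine ⟨α, ?_⟩
  simpa [eval_map, sub_eq_zero] using hα

theorem exists_polynomial_dvd_pow_sub_C {k : ℕ} (hk : 0 < k) (E : Finset ℤ) :
    ∃ F : ℤ[X], 0 < F.natDegree ∧
      ∀ c ∈ E, ∃ d : ℤ, d ≠ 0 ∧ ∃ G : ℤ[X], F ∣ G ^ k - C (d ^ k * c) := by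
  let L := SplittingField (∏ c ∈ E, (X ^ k - C (c : ℚ)))
  obtain ⟨θ, hθint, hθ⟩ := exists_isIntegral_int_adjoin_simple_eq_top L
  refine ⟨minpoly ℤ θ, minpoly.natDegree_pos hθint, fun c hc => ?_⟩
  obtain ⟨α, hα⟩ := SplittingField.exists_pow_eq_algebraMap hk (fun c : ℤ => (c : ℚ)) hc
  obtain ⟨d, hd, G, hG⟩ := exists_aeval_eq_zsmul_of_mem_adjoin_simple
    (Algebra.IsAlgebraic.isAlgebraic θ) (hθ ▸ mem_top : α ∈ ℚ⟮θ⟯)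
  refine ⟨d, hd, G, minpoly.isIntegrallyClosed_dvd hθint ?_⟩
  rw [map_sub, map_pow, hG, _root_.smul_pow, hα, aeval_C]
  simp

theorem infinitely_many_primes_kth_power_residues_int_general (k : ℕ) (hk : 0 < k)
    (E : Finset ℤ) :
    {p : ℕ | p.Prime ∧
      (∀ c ∈ E, ∃ x : ℤ, x ^ k ≡ c [ZMOD p]) ∧
      (∀ c ∈ E, ∀ c' ∈ E, c ≠ c' → ¬ c ≡ c' [ZMOD p])}.Infinite := by
  obtain ⟨F, hF, hroots⟩ := exists_polynomial_dvd_pow_sub_C hk E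
  choose! d hd G hG using hroots
  set D : ℤ := (∏ c ∈ E, d c) * ∏ cc ∈ E.offDiag, (cc.1 - cc.2)
  have hD : D ≠ 0 := mul_ne_zero (Finset.prod_ne_zero_iff.2 hd)
    (Finset.prod_ne_zero_iff.2 fun cc hcc => sub_ne_zero.2 (Finset.mem_offDiag.1 hcc).2.2)
  have hbad : {p : ℕ | (p : ℤ) ∣ D}.Finite :=
    (Nat.divisors D.natAbs).finite_toSet.subset fun p hp =>
      Nat.mem_divisors.2 ⟨Int.natCast_dvd.1 hp, Int.natAbs_ne_zero.2 hD⟩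
  refine ((setOf_prime_dvd_eval_infinite hF).sdiff hbad).mono ?_
  rintro p ⟨⟨hp, n, hpF⟩, hpD⟩
  refine ⟨hp, fun c hc => exists_pow_intModEq_of_dvd_eval hp (hG c hc) hpF fun hpd => ?_,
    fun c hc c' hc' hne hcc' => hpD ?_⟩
  · exact hpD (dvd_mul_of_dvd_left (hpd.trans (Finset.dvd_prod_of_mem d hc)) _)
  · exact dvd_mul_of_dvd_right ((Int.ModEq.dvd hcc'.symm).trans
      (Finset.dvd_prod_of_mem (fun cc : ℤ × ℤ => cc.1 - cc.2)
        (a := (c, c')) (Finset.mem_offDiag.2 ⟨hc, hc', hne⟩))) _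

theorem infinitely_many_primes_kth_power_residues_int (k : ℕ) (hk : 0 < k)
    (E : Finset ℤ) (hE : (0 : ℤ) ∉ E) :
    {p : ℕ | p.Prime ∧
      (∀ c ∈ E, ∃ x : ℤ, x ^ k ≡ c [ZMOD p]) ∧
      (∀ c ∈ E, ∀ c' ∈ E, c ≠ c' → ¬ c ≡ c' [ZMOD p])}.Infinite :=
  infinitely_many_primes_kth_power_residues_int_general k hk E
end

section
/- Let F_q be a finite field, A = F_q[T], let k be a positive integer, and let E be a finite set of pairwise distinct nonzero polynomials in A. Then there exist infinitely many nonzero prime ideals P of A such that every element of E is a kth power residue modulo P and the elements of E are pairwise incongruent modulo P. -/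
/-!
Let `p` be the characteristic of `F_q` and write `k = p ^ e * n` with `p ∤ n`. In a finite field
of characteristic `p` every element is a `p ^ e`-th power, so only `n`-th powers matter.
Adjoining `n`-th roots of all `c ∈ E` to `F_q(T)` gives a finite separable extension; it has a
primitive element `θ` integral over `A`, and every root is `g_c(θ) / d_c` with `g_c ∈ A[X]`,
`d_c ∈ A`. Whenever the minimal polynomial `m` of `θ` over `A` has a root modulo a prime `π ∤ d_c`,
`c` is an `n`-th power modulo `π`. Schur's argument produces such primes avoiding any given
nonzero `D`; letting `D` be divisible by all differences of elements of `E` and by a nonzero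
element of each prime found so far yields infinitely many.
-/

open Polynomial IntermediateField

theorem exists_irreducible_dvd_eval_not_dvd_s13 {K : Type*} [Field K] {m : K[X][X]}
    (hm : 0 < m.natDegree) {D : K[X]} (hD : D ≠ 0) :
    ∃ π r : K[X], Irreducible π ∧ ¬ π ∣ D ∧ π ∣ m.eval r := by
  obtain ⟨s, hs⟩ : ∃ s, ¬ m.IsRoot s :=
    (finite_setOfPred_isRoot (ne_zero_of_natDegree_gt hm)).exists_notMem
  set a := m.eval s
  have hb : a * D * X ≠ 0 := mul_ne_zero (mul_ne_zero hs hD) X_ne_zero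
  have hma : m - C a ≠ 0 := fun h ↦ by
    rw [sub_eq_zero.mp h, natDegree_C] at hm; exact hm.false
  obtain ⟨t, ht⟩ : ∃ t, ¬ (m - C a).IsRoot (s + a * D * X * t) :=
    ((finite_setOfPred_isRoot hma).preimage
      ((add_right_injective s).comp (mul_right_injective₀ hb)).injOn).exists_notMem
  -- Schur's trick: `m (s + a D X t) ≡ m s = a` modulo `a D X t`, so this value is `a` times
  -- a nonconstant polynomial that is `≡ 1 (mod D)`.
  obtain ⟨u, hu⟩ : a * D * X * t ∣ m.eval (s + a * D * X * t) - a := by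
    have := sub_dvd_eval_sub (s + a * D * X * t) s m
    rwa [add_sub_cancel_left] at this
  have htu : D * t * u ≠ 0 := fun h ↦ ht <| by
    simp only [IsRoot, eval_sub, eval_C]
    linear_combination hu + a * X * h
  have hw : m.eval (s + a * D * X * t) = a * (X * (D * t * u) + 1) := by
    linear_combination hu
  have hw_pos : 0 < (X * (D * t * u) + 1).natDegree := by
    rw [← C_1, natDegree_add_C, natDegree_X_mul htu]; exact Nat.succ_pos _
  obtain ⟨π, hπ, hπw⟩ := WfDvdMonoid.exists_irreducible_factor
    (not_isUnit_of_natDegree_pos _ hw_pos) (ne_zero_of_natDegree_gt hw_pos)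
  refine ⟨π, _, hπ, fun hπD ↦ hπ.not_isUnit (isUnit_of_dvd_one ?_), hw ▸ hπw.mul_left a⟩
  exact (dvd_add_right (((hπD.mul_right t).mul_right u).mul_left X)).mp hπw

theorem exists_pow_eq_of_dvd_pow_sub_C {A L : Type*} [CommRing A] [Field L] (φ : A →+* L)
    {m g : A[X]} {n : ℕ} {d c : A} (hdvd : m ∣ g ^ n - C (d ^ n * c)) {r : L}
    (hr : m.eval₂ φ r = 0) (hd : φ d ≠ 0) : ∃ y : L, y ^ n = φ c := by
  obtain ⟨q, hq⟩ := hdvd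
  have hgr := congrArg (eval₂ φ r) hq
  simp only [eval₂_sub, eval₂_pow, eval₂_C, eval₂_mul, hr, zero_mul, map_mul, map_pow] at hgr
  refine ⟨g.eval₂ φ r / φ d, ?_⟩
  rw [div_pow, div_eq_iff (pow_ne_zero _ hd)]
  linear_combination hgr

theorem exists_isIntegral_forall_exists_aeval_eq_mul (A F L : Type*) [CommRing A] [IsDomain A]
    [Field F] [Algebra A F] [IsFractionRing A F] [Field L] [Algebra F L] [Algebra A L]
    [IsScalarTower A F L] [FiniteDimensional F L] [Algebra.IsSeparable F L] :
    ∃ θ : L, IsIntegral A θ ∧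
      ∀ α : L, ∃ d : A, d ≠ 0 ∧ ∃ g : A[X], aeval θ g = algebraMap A L d * α := by
  obtain ⟨θ₀, hθ₀⟩ := Field.exists_primitive_element F L
  obtain ⟨e, he, hθ⟩ := ((IsFractionRing.isAlgebraic_iff A F L).mpr
    (Algebra.IsAlgebraic.isAlgebraic θ₀)).exists_integral_multiple
  have he' : algebraMap A F e ≠ 0 := (map_ne_zero_iff _ (IsFractionRing.injective A F)).mpr he
  set θ := e • θ₀ with hθ_def
  have htop : F⟮θ⟯ = ⊤ := by
    refine eq_top_iff.mpr (hθ₀ ▸ adjoin_simple_le_iff.mpr ?_)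
    have : θ₀ = (algebraMap A F e)⁻¹ • θ := by
      rw [hθ_def, ← algebraMap_smul F e θ₀, inv_smul_smul₀ he']
    exact this ▸ smul_mem _ (mem_adjoin_simple_self F θ)
  refine ⟨θ, hθ, fun α ↦ ?_⟩
  have hα : α ∈ F⟮θ⟯.toSubalgebra := htop ▸ trivial
  rw [adjoin_simple_toSubalgebra_of_isAlgebraic (Algebra.IsAlgebraic.isAlgebraic _),
    Algebra.adjoin_singleton_eq_range_aeval] at hα
  obtain ⟨G, rfl⟩ := hα
  obtain ⟨b, hb, hbG⟩ := IsLocalization.integerNormalization_spec (nonZeroDivisors A) G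
  refine ⟨b, nonZeroDivisors.ne_zero hb,
    IsLocalization.integerNormalization (nonZeroDivisors A) G, ?_⟩
  rw [← aeval_map_algebraMap F, hbG, ← algebraMap_smul F b G, map_smul, Algebra.smul_def,
    ← IsScalarTower.algebraMap_apply]
  rfl

theorem exists_natDegree_pos_forall_dvd_pow_sub_C_s13 (A : Type*) [CommRing A] [IsDomain A]
    [IsIntegrallyClosed A] {n : ℕ} (hn : (n : A) ≠ 0) {E : Finset A} (hE : 0 ∉ E) :
    ∃ m : A[X], 0 < m.natDegree ∧
      ∀ c ∈ E, ∃ d : A, d ≠ 0 ∧ ∃ g : A[X], m ∣ g ^ n - C (d ^ n * c) := by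
  let F := FractionRing A
  let Ω := AlgebraicClosure F
  have hinj : Function.Injective (algebraMap A Ω) := by
    rw [IsScalarTower.algebraMap_eq A F Ω]
    exact (algebraMap F Ω).injective.comp (IsFractionRing.injective A F)
  have hnF : (n : F) ≠ 0 := by
    rwa [← map_natCast (algebraMap A F), map_ne_zero_iff _ (IsFractionRing.injective A F)]
  have hn0 : n ≠ 0 := by rintro rfl; simp at hn
  have hroot (c : A) : ∃ α : Ω, α ^ n = algebraMap A Ω c :=
    IsAlgClosed.exists_pow_nat_eq _ (Nat.pos_of_ne_zero hn0)
  choose α hα using hroot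
  have hαF (c : A) (hc : c ≠ 0) : IsIntegral F (α c) ∧ IsSeparable F (α c) := by
    have hαc : aeval (α c) (X ^ n - C (algebraMap A F c)) = 0 := by
      rw [map_sub, map_pow, aeval_X, aeval_C, ← IsScalarTower.algebraMap_apply, hα, sub_self]
    have hc' := (map_ne_zero_iff _ (IsFractionRing.injective A F)).mpr hc
    have hsep := separable_X_pow_sub_C _ hnF hc'
    exact ⟨⟨_, monic_X_pow_sub_C _ hn0, hαc⟩, hsep.of_dvd (minpoly.dvd F _ hαc)⟩
  let K := IntermediateField.adjoin F (α '' E)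
  have hαK {c : A} (hc : c ∈ E) : α c ∈ K := subset_adjoin F _ (Set.mem_image_of_mem α hc)
  have : FiniteDimensional F K := finiteDimensional_adjoin (by
    rintro _ ⟨c, hc, rfl⟩; exact (hαF c (ne_of_mem_of_not_mem hc hE)).1)
  have : Algebra.IsSeparable F K := (isSeparable_adjoin_iff_isSeparable F Ω).mpr (by
    rintro _ ⟨c, hc, rfl⟩; exact (hαF c (ne_of_mem_of_not_mem hc hE)).2)
  have : Module.IsTorsionFree A K := by
    refine (Module.isTorsionFree_iff_algebraMap_injective (R := A) (A := K)).mpr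
      fun x y hxy ↦ hinj ?_
    exact congrArg Subtype.val hxy
  obtain ⟨θ, hθ, hK⟩ := exists_isIntegral_forall_exists_aeval_eq_mul A F K
  refine ⟨minpoly A θ, minpoly.natDegree_pos hθ, fun c hc ↦ ?_⟩
  obtain ⟨d, hd, g, hg⟩ := hK ⟨α c, hαK hc⟩
  refine ⟨d, hd, g, minpoly.isIntegrallyClosed_dvd hθ ?_⟩
  have hcK : (⟨α c, hαK hc⟩ : K) ^ n = algebraMap A K c := Subtype.ext (hα c)
  rw [map_sub, map_pow, hg, aeval_C, mul_pow, hcK, map_mul, map_pow, sub_self]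

theorem exists_irreducible_forall_dvd_pow_sub {Fq : Type*} [Field Fq] [Finite Fq] {k : ℕ}
    (hk : k ≠ 0) {E : Finset Fq[X]} (hE : 0 ∉ E) {D : Fq[X]} (hD : D ≠ 0) :
    ∃ π : Fq[X], Irreducible π ∧ ¬ π ∣ D ∧ ∀ c ∈ E, ∃ x : Fq[X], π ∣ x ^ k - c := by
  set p := ringChar Fq
  have hp : p.Prime := CharP.char_is_prime Fq p
  obtain ⟨e, n, hpn, rfl⟩ := Nat.exists_eq_pow_mul_and_not_dvd hk p hp.ne_one
  have hn : (n : Fq[X]) ≠ 0 := by rwa [Ne, CharP.cast_eq_zero_iff Fq[X] p]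
  obtain ⟨m, hm, hmE⟩ := exists_natDegree_pos_forall_dvd_pow_sub_C_s13 Fq[X] hn hE
  choose! d hd g hg using hmE
  obtain ⟨π, r, hπ, hπD, hπm⟩ := exists_irreducible_dvd_eval_not_dvd_s13 hm
    (mul_ne_zero hD (Finset.prod_ne_zero_iff.mpr hd))
  refine ⟨π, hπ, fun h ↦ hπD (h.mul_right _), fun c hc ↦ ?_⟩
  have : Fact (Irreducible π) := ⟨hπ⟩
  have : Module.Finite Fq (AdjoinRoot π) := (AdjoinRoot.powerBasis hπ.ne_zero).finite
  have : Finite (AdjoinRoot π) := Module.finite_of_finite Fq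
  have : CharP (AdjoinRoot π) p := charP_of_injective_algebraMap (algebraMap Fq _).injective p
  have : ExpChar (AdjoinRoot π) p := ExpChar.prime hp
  have hdc : AdjoinRoot.mk π (d c) ≠ 0 := fun h ↦ hπD <|
    (AdjoinRoot.mk_eq_zero.mp h).trans ((Finset.dvd_prod_of_mem d hc).mul_left D)
  obtain ⟨y, hy⟩ := exists_pow_eq_of_dvd_pow_sub_C (AdjoinRoot.mk π) (hg c hc)
    (by rw [eval₂_at_apply, AdjoinRoot.mk_eq_zero]; exact hπm) hdc
  obtain ⟨z, hz⟩ := (bijective_iterateFrobenius (AdjoinRoot π) p e).2 y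
  obtain ⟨x, rfl⟩ := AdjoinRoot.mk_surjective z
  refine ⟨x, AdjoinRoot.mk_eq_zero.mp ?_⟩
  rw [map_sub, map_pow, pow_mul, ← iterateFrobenius_def, hz, hy, sub_self]

theorem Ideal.setOf_infinite_of_forall_exists_notMem {R : Type*} [CommRing R] [IsDomain R]
    {S : Set (Ideal R)} (hS : ∀ P ∈ S, P ≠ ⊥) (h : ∀ D : R, D ≠ 0 → ∃ P ∈ S, D ∉ P) :
    S.Infinite := by
  intro hfin
  choose! x hxP hx0 using fun P hP ↦ Submodule.exists_mem_ne_zero_of_ne_bot (hS P hP)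
  obtain ⟨P, hP, hDP⟩ := h (∏ P ∈ hfin.toFinset, x P)
    (Finset.prod_ne_zero_iff.mpr fun P hP ↦ hx0 P (hfin.mem_toFinset.mp hP))
  exact hDP (P.mem_of_dvd (Finset.dvd_prod_of_mem x (hfin.mem_toFinset.mpr hP)) (hxP P hP))

theorem infinitely_many_primes_kth_power_residues_polynomial (Fq : Type*) [Field Fq]
    [Fintype Fq] (k : ℕ) (hk : 0 < k) (E : Finset (Polynomial Fq))
    (hE : (0 : Polynomial Fq) ∉ E) :
    {P : Ideal (Polynomial Fq) | P ≠ ⊥ ∧ P.IsPrime ∧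
      (∀ c ∈ E, ∃ x : Polynomial Fq, x ^ k - c ∈ P) ∧
      (∀ c ∈ E, ∀ c' ∈ E, c ≠ c' → c - c' ∉ P)}.Infinite := by
  refine Ideal.setOf_infinite_of_forall_exists_notMem (fun P hP ↦ hP.1) fun D hD ↦ ?_
  have hΔ : ∏ cc ∈ E.offDiag, (cc.1 - cc.2) ≠ 0 :=
    Finset.prod_ne_zero_iff.mpr fun cc hcc ↦ sub_ne_zero.mpr (Finset.mem_offDiag.mp hcc).2.2
  obtain ⟨π, hπ, hπD, hπE⟩ := exists_irreducible_forall_dvd_pow_sub hk.ne' hE (mul_ne_zero hD hΔ)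
  refine ⟨Ideal.span {π}, ⟨?_, ?_, ?_, ?_⟩, ?_⟩
  · exact mt Ideal.span_singleton_eq_bot.mp hπ.ne_zero
  · exact (Ideal.span_singleton_prime hπ.ne_zero).mpr hπ.prime
  · exact fun c hc ↦ (hπE c hc).imp fun x ↦ Ideal.mem_span_singleton.mpr
  · refine fun c hc c' hc' hcc' hπc ↦ hπD ((Ideal.mem_span_singleton.mp hπc).trans ?_)
    exact (Finset.dvd_prod_of_mem (fun cc ↦ cc.1 - cc.2) (a := (c, c'))
      (Finset.mem_offDiag.mpr ⟨hc, hc', hcc'⟩)).mul_left D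
  · exact fun hDπ ↦ hπD ((Ideal.mem_span_singleton.mp hDπ).mul_right _)
end
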